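/- arXiv:2602.05504 — 4 statements merged into one kernel-verified Lean document; each statement's English description precedes it below -/
import Mathlib

section
/- Let (T_k) be random times with T_0 = 0 and i.i.d. rate-1 exponential increments, let α > 0 and n ≥ 1. For 1 ≤ k ≤ n define A_k = Σ_{l=k}^n Σ_{m=k}^l Σ_{j=1}^k e^{α(T_k − T_l)} e^{α(T_m − T_l)} e^{α(T_j − T_k)} (T_m − T_j) and B_k = Σ_{l=k}^n Σ_{m=k}^l Σ_{j=1}^k e^{α(T_k − T_l)} e^{α(T_m − T_l)} e^{α(T_j − T_k)} (m − j). Then max_{2 ≤ k ≤ n} E[A_k] ≤ (1+2α)⁴/α⁴ and max_{1 ≤ k ≤ n} E[B_k] ≤ (1+2α)⁵/α⁴. -/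
open MeasureTheory ProbabilityTheory

section Aux
open Real Set

lemma expMeasure_ae_nonneg : ∀ᵐ x ∂(expMeasure 1), (0:ℝ) ≤ x := by
  have h : (expMeasure 1) (Set.Iio 0) = 0 := by
    rw [expMeasure, gammaMeasure, withDensity_apply _ measurableSet_Iio]
    exact lintegral_gammaPDF_of_nonpos le_rfl
  rw [ae_iff]
  convert h using 2
  ext x; simp [not_le]

lemma integral_expMeasure_one (f : ℝ → ℝ) (hf : Measurable f)
    (hnn : ∀ x, 0 ≤ x → 0 ≤ f x)
    (hfi : IntegrableOn (fun x => Real.exp (-x) * f x) (Set.Ioi 0)) :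
    ∫ x, f x ∂(expMeasure 1) = ∫ x in Set.Ioi 0, Real.exp (-x) * f x := by
  have hae : 0 ≤ᵐ[expMeasure 1] f := by
    filter_upwards [expMeasure_ae_nonneg] with x hx using hnn x hx
  rw [integral_eq_lintegral_of_nonneg_ae hae hf.aestronglyMeasurable]
  have hd : Measurable (gammaPDF 1 1) := (measurable_gammaPDFReal 1 1).ennreal_ofReal
  have h1 : ∫⁻ x, ENNReal.ofReal (f x) ∂(expMeasure 1)
      = ∫⁻ x, gammaPDF 1 1 x * ENNReal.ofReal (f x) := by
    rw [expMeasure, gammaMeasure, lintegral_withDensity_eq_lintegral_mul _ hd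
      hf.ennreal_ofReal]
    rfl
  rw [h1, ← lintegral_add_compl (fun x => gammaPDF 1 1 x * ENNReal.ofReal (f x))
    measurableSet_Ici (μ := volume)]
  have h2 : ∫⁻ x in (Set.Ici (0:ℝ))ᶜ, gammaPDF 1 1 x * ENNReal.ofReal (f x) = 0 := by
    rw [compl_Ici]
    rw [setLIntegral_congr_fun measurableSet_Iio
      (fun x (hx : x < 0) => by rw [gammaPDF_of_neg hx, zero_mul])]
    simp
  have h3 : ∫⁻ x in Set.Ici (0:ℝ), gammaPDF 1 1 x * ENNReal.ofReal (f x)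
      = ∫⁻ x in Set.Ioi (0:ℝ), ENNReal.ofReal (Real.exp (-x) * f x) := by
    rw [← setLIntegral_congr Ioi_ae_eq_Ici]
    refine setLIntegral_congr_fun measurableSet_Ioi (fun x (hx : 0 < x) => ?_)
    rw [gammaPDF_of_nonneg hx.le, ← ENNReal.ofReal_mul (by positivity)]
    congr 1
    rw [Real.Gamma_one]
    rw [show (1:ℝ) - 1 = 0 by norm_num, Real.rpow_zero, Real.rpow_one]
    ring_nf
  rw [h2, h3, add_zero, ← ofReal_integral_eq_lintegral_ofReal hfi ?_, ENNReal.toReal_ofReal]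
  · exact setIntegral_nonneg measurableSet_Ioi fun x hx => by
      have := hnn x (le_of_lt hx); positivity
  · rw [Filter.EventuallyLE, ae_restrict_iff' measurableSet_Ioi]
    exact ae_of_all _ fun x hx => by
      have := hnn x (le_of_lt hx); simp only [Pi.zero_apply]; positivity
lemma mul_exp_neg_le {c x : ℝ} (hc : 0 < c) (hx : 0 ≤ x) : x * Real.exp (-(c*x)) ≤ 1/c := by
  have he := Real.exp_pos (-(c*x))
  have hprod : Real.exp (-(c*x)) * Real.exp (c*x) = 1 := by rw [← Real.exp_add]; simp
  have hcx : c * x ≤ Real.exp (c*x) := by have := Real.add_one_le_exp (c*x); linarith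
  rw [le_div_iff₀ hc]
  nlinarith [mul_le_mul_of_nonneg_right hcx he.le]

lemma moment0_int {c : ℝ} (hc : 0 < c) :
    IntegrableOn (fun x : ℝ => Real.exp (-x) * Real.exp (-(c * x))) (Set.Ioi 0) := by
  have h : ∀ x : ℝ, Real.exp (-x) * Real.exp (-(c*x)) = Real.exp (-(1+c) * x) := by
    intro x; rw [← Real.exp_add]; congr 1; ring
  simp_rw [h]
  exact exp_neg_integrableOn_Ioi 0 (by linarith)

lemma moment0 {c : ℝ} (hc : 0 < c) :
    ∫ x, Real.exp (-(c * x)) ∂(expMeasure 1) = (1 + c)⁻¹ := by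
  rw [integral_expMeasure_one _ (by fun_prop) (fun x _ => (Real.exp_pos _).le) (moment0_int hc)]
  have h1 : ∀ x : ℝ, Real.exp (-x) * Real.exp (-(c*x)) = x ^ ((1:ℝ)-1) * Real.exp (-((1+c)*x)) := by
    intro x; rw [sub_self, Real.rpow_zero, one_mul, ← Real.exp_add]; congr 1; ring
  simp_rw [h1]
  rw [integral_rpow_mul_exp_neg_mul_Ioi one_pos (by linarith : (0:ℝ) < 1 + c)]
  rw [Real.rpow_one, Real.Gamma_one]
  rw [one_div, mul_one]

lemma moment1_int {c : ℝ} (hc : 0 < c) :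
    IntegrableOn (fun x : ℝ => Real.exp (-x) * (x * Real.exp (-(c * x)))) (Set.Ioi 0) := by
  have h : ∀ x : ℝ, Real.exp (-x) * (x * Real.exp (-(c*x))) = x * Real.exp (-((1+c)*x)) := by
    intro x
    rw [mul_comm (Real.exp (-x)), mul_assoc, ← Real.exp_add]
    congr 2; ring
  simp_rw [h]
  set r : ℝ := 1 + c with hr
  have hr0 : 0 < r := by rw [hr]; linarith
  refine Integrable.mono' ((exp_neg_integrableOn_Ioi 0 (half_pos hr0)).const_mul (2/r))
    ((measurable_id.mul (by fun_prop)).aestronglyMeasurable) ?_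
  rw [ae_restrict_iff' measurableSet_Ioi]
  refine ae_of_all _ fun x (hx : 0 < x) => ?_
  have h3 : ‖x * Real.exp (-(r*x))‖ = x * Real.exp (-(r*x)) := by
    rw [Real.norm_eq_abs, abs_of_nonneg]; positivity
  rw [h3]
  have key : x * Real.exp (-(r/2*x)) ≤ 1/(r/2) := mul_exp_neg_le (half_pos hr0) hx.le
  have hsplit : Real.exp (-(r*x)) = Real.exp (-(r/2*x)) * Real.exp (-(r/2*x)) := by
    rw [← Real.exp_add]; congr 1; ring
  have h4 : (1:ℝ)/(r/2) = 2/r := by field_simp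
  calc x * Real.exp (-(r*x)) = (x * Real.exp (-(r/2*x))) * Real.exp (-(r/2*x)) := by
        rw [hsplit]; ring
  _ ≤ 2/r * Real.exp (-(r/2*x)) := by
        apply mul_le_mul_of_nonneg_right _ (Real.exp_pos _).le
        rw [← h4]; exact key
  _ = 2/r * Real.exp (-(r/2)*x) := by ring_nf

lemma moment1 {c : ℝ} (hc : 0 < c) :
    ∫ x, x * Real.exp (-(c * x)) ∂(expMeasure 1) = ((1 + c)^2)⁻¹ := by
  rw [integral_expMeasure_one _ (by fun_prop) (fun x hx => by positivity) (moment1_int hc)]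
  have h1 : ∀ x ∈ Set.Ioi (0:ℝ), Real.exp (-x) * (x * Real.exp (-(c*x)))
      = x ^ ((2:ℝ)-1) * Real.exp (-((1+c)*x)) := by
    intro x hx
    rw [show (2:ℝ)-1 = 1 by norm_num, Real.rpow_one, mul_comm (Real.exp (-x)), mul_assoc,
      ← Real.exp_add]
    congr 2; ring
  rw [setIntegral_congr_fun measurableSet_Ioi h1]
  rw [integral_rpow_mul_exp_neg_mul_Ioi two_pos (by linarith : (0:ℝ) < 1 + c)]
  have hg : Real.Gamma 2 = 1 := by
    rw [show (2:ℝ) = (1:ℕ) + 1 by norm_num, Real.Gamma_nat_eq_factorial]; simp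
  rw [hg, mul_one, show (2:ℝ) = ((2:ℕ):ℝ) by norm_num, Real.rpow_natCast]
  rw [one_div, inv_pow]

lemma integrable_exp_expMeasure {c : ℝ} (hc : 0 < c) :
    Integrable (fun x : ℝ => Real.exp (-(c * x))) (expMeasure 1) := by
  haveI := isProbabilityMeasure_expMeasure one_pos
  refine Integrable.mono' (integrable_const 1)
    ((by fun_prop : Measurable fun x : ℝ => Real.exp (-(c*x))).aestronglyMeasurable) ?_
  filter_upwards [expMeasure_ae_nonneg] with x hx
  rw [Real.norm_eq_abs, abs_of_nonneg (Real.exp_pos _).le]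
  exact Real.exp_le_one_iff.mpr (by nlinarith)

lemma integrable_id_exp_expMeasure {c : ℝ} (hc : 0 < c) :
    Integrable (fun x : ℝ => x * Real.exp (-(c * x))) (expMeasure 1) := by
  haveI := isProbabilityMeasure_expMeasure one_pos
  refine Integrable.mono' (integrable_const (1/c))
    ((measurable_id.mul (by fun_prop : Measurable fun x : ℝ => Real.exp (-(c*x)))).aestronglyMeasurable) ?_
  filter_upwards [expMeasure_ae_nonneg] with x hx
  rw [Real.norm_eq_abs, abs_of_nonneg (by positivity)]
  exact mul_exp_neg_le hc hx

lemma indep_prod_integral {Ω : Type*} [MeasurableSpace Ω] {μ : Measure Ω}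
    [IsProbabilityMeasure μ] {ι : Type*} [DecidableEq ι] {X : ι → Ω → ℝ}
    (hind : iIndepFun X μ) (hX : ∀ i, Measurable (X i))
    (s : Finset ι) (hint : ∀ i ∈ s, Integrable (X i) μ) :
    Integrable (fun ω => ∏ i ∈ s, X i ω) μ ∧
      ∫ ω, ∏ i ∈ s, X i ω ∂μ = ∏ i ∈ s, ∫ ω, X i ω ∂μ := by
  classical
  induction s using Finset.induction with
  | empty => simp
  | @insert a s ha ih =>
    obtain ⟨ih1, ih2⟩ := ih (fun i hi => hint i (Finset.mem_insert_of_mem hi))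
    have hindp : IndepFun (fun ω => ∏ i ∈ s, X i ω) (X a) μ := by
      have := hind.indepFun_finsetProd_of_notMem hX ha
      simpa [Finset.prod_fn] using this
    have hia : Integrable (X a) μ := hint a (Finset.mem_insert_self a s)
    have hintmul : Integrable (fun ω => X a ω * ∏ i ∈ s, X i ω) μ := by
      have := hindp.integrable_mul ih1 hia
      exact (by simpa [mul_comm] using this : Integrable (X a * fun ω => ∏ i ∈ s, X i ω) μ)
    constructor
    · simpa [Finset.prod_insert ha] using hintmul
    · rw [show (fun ω => ∏ i ∈ insert a s, X i ω)
        = fun ω => X a ω * ∏ i ∈ s, X i ω from funext fun ω => Finset.prod_insert ha]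
      have := hindp.integral_fun_mul_eq_mul_integral ih1.aestronglyMeasurable hia.aestronglyMeasurable
      simp only [Finset.prod_insert ha]
      rw [show (∫ ω, X a ω * ∏ i ∈ s, X i ω ∂μ) = ∫ ω, (∏ i ∈ s, X i ω) * X a ω ∂μ from by
        congr 1; funext ω; ring, this, ih2]
      ring

lemma geom_sum_le' {r : ℝ} (h0 : 0 ≤ r) (h1 : r < 1) (N : ℕ) :
    ∑ i ∈ Finset.range N, r ^ i ≤ (1 - r)⁻¹ := by
  have hsum : Summable (fun n : ℕ => r ^ n) := summable_geometric_of_lt_one h0 h1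
  calc ∑ i ∈ Finset.range N, r ^ i ≤ ∑' n : ℕ, r ^ n :=
        Summable.sum_le_tsum _ (fun i _ => pow_nonneg h0 i) hsum
  _ = (1 - r)⁻¹ := tsum_geometric_of_lt_one h0 h1

lemma geom_mul_sum_le {r : ℝ} (h0 : 0 ≤ r) (h1 : r < 1) (N : ℕ) :
    ∑ i ∈ Finset.range N, (i : ℝ) * r ^ i ≤ r * ((1 - r) ^ 2)⁻¹ := by
  have hr' : ‖r‖ < 1 := by rw [Real.norm_eq_abs, abs_of_nonneg h0]; exact h1
  have hsum : Summable (fun n : ℕ => (n : ℝ) * r ^ n) := by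
    simpa using summable_pow_mul_geometric_of_norm_lt_one 1 hr'
  calc ∑ i ∈ Finset.range N, (i : ℝ) * r ^ i ≤ ∑' n : ℕ, (n : ℝ) * r ^ n :=
        Summable.sum_le_tsum _ (fun i _ => by positivity) hsum
  _ = r / (1 - r) ^ 2 := tsum_coe_mul_geometric_of_norm_lt_one hr'
  _ = r * ((1 - r) ^ 2)⁻¹ := by rw [div_eq_mul_inv]

lemma sum_bound {x y : ℝ} (hx0 : 0 ≤ x) (hx1 : x < 1) (hy0 : 0 ≤ y) (hy1 : y < 1)
    (k n : ℕ) (hk : 1 ≤ k) :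
    ∑ l ∈ Finset.Icc k n, ∑ m ∈ Finset.Icc k l, ∑ j ∈ Finset.Icc 1 k,
      (((m:ℝ) - (j:ℝ)) * x ^ (m - j) * y ^ (l - m))
      ≤ 2 * x * ((1-x)^3)⁻¹ * (1-y)⁻¹ := by
  have hx' : (0:ℝ) < 1 - x := by linarith
  have hy' : (0:ℝ) < 1 - y := by linarith
  simp_rw [← Finset.Ico_add_one_right_eq_Icc]
  rw [← Finset.sum_Ico_Ico_comm]
  simp_rw [← Finset.sum_mul, ← Finset.mul_sum]
  -- now : ∑ m ∈ Ico k (n+1), (∑ j ∈ Ico 1 (k+1), ((m:ℝ)-j)*x^(m-j)) * (∑ l ∈ Ico m (n+1), y^(l-m))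
  have hG : ∀ m, (∑ l ∈ Finset.Ico m (n+1), y ^ (l - m)) ≤ (1-y)⁻¹ := by
    intro m
    rw [Finset.sum_Ico_eq_sum_range]
    simp_rw [Nat.add_sub_cancel_left]
    exact geom_sum_le' hy0 hy1 _
  have hGnn : ∀ m, (0:ℝ) ≤ ∑ l ∈ Finset.Ico m (n+1), y ^ (l - m) := fun m =>
    Finset.sum_nonneg fun l _ => pow_nonneg hy0 _
  have hJ : ∀ m, k ≤ m → (∑ j ∈ Finset.Ico 1 (k+1), ((m:ℝ) - (j:ℝ)) * x ^ (m - j))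
      ≤ x ^ (m - k) * (((m - k : ℕ) : ℝ) * (1-x)⁻¹ + x * ((1-x)^2)⁻¹) := by
    intro m hm
    have hre : (∑ j ∈ Finset.Ico 1 (k+1), ((m:ℝ) - (j:ℝ)) * x ^ (m - j))
        = ∑ i ∈ Finset.range k, (((m - k + i : ℕ) : ℝ)) * x ^ (m - k + i) := by
      rw [Finset.sum_Ico_eq_sum_range]
      simp only [Nat.add_sub_cancel]
      rw [← Finset.sum_range_reflect]
      refine Finset.sum_congr rfl fun i hi => ?_
      have hik : i < k := Finset.mem_range.mp hi
      have h1 : 1 + (k - 1 - i) = k - i := by omega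
      have h2 : m - (k - i) = m - k + i := by omega
      have h3 : ((m:ℝ) - ((k - i : ℕ) : ℝ)) = ((m - k + i : ℕ) : ℝ) := by
        push_cast [Nat.cast_sub (show i ≤ k by omega), Nat.cast_sub hm]
        ring
      rw [h1, h2, h3]
    rw [hre]
    have hterm : ∀ i : ℕ, ((m - k + i : ℕ) : ℝ) * x ^ (m - k + i)
        = x ^ (m - k) * ((((m - k : ℕ) : ℝ) + (i:ℝ)) * x ^ i) := by
      intro i
      rw [pow_add, Nat.cast_add]
      ring
    simp_rw [hterm, ← Finset.mul_sum]
    refine mul_le_mul_of_nonneg_left ?_ (pow_nonneg hx0 _)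
    calc ∑ i ∈ Finset.range k, ((((m - k : ℕ) : ℝ) + (i:ℝ)) * x ^ i)
        = ((m - k : ℕ) : ℝ) * (∑ i ∈ Finset.range k, x ^ i)
          + ∑ i ∈ Finset.range k, (i:ℝ) * x ^ i := by
          simp_rw [add_mul]
          rw [Finset.sum_add_distrib, Finset.mul_sum]
    _ ≤ ((m - k : ℕ) : ℝ) * (1-x)⁻¹ + x * ((1-x)^2)⁻¹ := by
          refine add_le_add ?_ (geom_mul_sum_le hx0 hx1 _)
          exact mul_le_mul_of_nonneg_left (geom_sum_le' hx0 hx1 _) (Nat.cast_nonneg _)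
  have hJnn : ∀ m, k ≤ m → (0:ℝ) ≤ ∑ j ∈ Finset.Ico 1 (k+1), ((m:ℝ) - (j:ℝ)) * x ^ (m - j) := by
    intro m hm
    refine Finset.sum_nonneg fun j hj => ?_
    have := Finset.mem_Ico.mp hj
    have hjm : (j:ℝ) ≤ (m:ℝ) := by exact_mod_cast by omega
    have : (0:ℝ) ≤ (m:ℝ) - (j:ℝ) := by linarith
    positivity
  calc ∑ m ∈ Finset.Ico k (n+1), (∑ j ∈ Finset.Ico 1 (k+1), ((m:ℝ) - (j:ℝ)) * x ^ (m - j))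
        * (∑ l ∈ Finset.Ico m (n+1), y ^ (l - m))
      ≤ ∑ m ∈ Finset.Ico k (n+1),
          (x ^ (m - k) * (((m - k : ℕ) : ℝ) * (1-x)⁻¹ + x * ((1-x)^2)⁻¹)) * (1-y)⁻¹ := by
        refine Finset.sum_le_sum fun m hm => ?_
        have hkm : k ≤ m := (Finset.mem_Ico.mp hm).1
        exact mul_le_mul (hJ m hkm) (hG m) (hGnn m) (by positivity)
  _ = (∑ m ∈ Finset.Ico k (n+1),
        x ^ (m - k) * (((m - k : ℕ) : ℝ) * (1-x)⁻¹ + x * ((1-x)^2)⁻¹)) * (1-y)⁻¹ := by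
        rw [Finset.sum_mul]
  _ ≤ (2 * x * ((1-x)^3)⁻¹) * (1-y)⁻¹ := by
        refine mul_le_mul_of_nonneg_right ?_ (by positivity)
        rw [Finset.sum_Ico_eq_sum_range]
        simp_rw [Nat.add_sub_cancel_left]
        calc ∑ i ∈ Finset.range (n+1-k), x ^ i * (((i:ℕ):ℝ) * (1-x)⁻¹ + x * ((1-x)^2)⁻¹)
            = (1-x)⁻¹ * (∑ i ∈ Finset.range (n+1-k), (i:ℝ) * x ^ i)
              + (x * ((1-x)^2)⁻¹) * (∑ i ∈ Finset.range (n+1-k), x ^ i) := by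
              simp_rw [mul_add]
              rw [Finset.sum_add_distrib, Finset.mul_sum, Finset.mul_sum]
              congr 1 <;> [skip; skip] <;> refine Finset.sum_congr rfl fun i _ => by ring
        _ ≤ (1-x)⁻¹ * (x * ((1-x)^2)⁻¹) + (x * ((1-x)^2)⁻¹) * (1-x)⁻¹ := by
              refine add_le_add ?_ ?_
              · exact mul_le_mul_of_nonneg_left (geom_mul_sum_le hx0 hx1 _) (by positivity)
              · exact mul_le_mul_of_nonneg_left (geom_sum_le' hx0 hx1 _) (by positivity)
        _ = 2 * x * ((1-x)^3)⁻¹ := by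
              field_simp
              ring
  _ = 2 * x * ((1-x)^3)⁻¹ * (1-y)⁻¹ := rfl

lemma numericA {α : ℝ} (hα : 0 < α) :
    (1+α)⁻¹ * (2 * (1+α)⁻¹ * ((1 - (1+α)⁻¹)^3)⁻¹ * (1 - (1+2*α)⁻¹)⁻¹)
      ≤ (1 + 2*α)^4 / α^4 := by
  have h1 : (0:ℝ) < 1 + α := by linarith
  have h2 : (0:ℝ) < 1 + 2*α := by linarith
  have e1 : 1 - (1+α)⁻¹ = α / (1+α) := by field_simp; ring
  have e2 : 1 - (1+2*α)⁻¹ = (2*α) / (1+2*α) := by field_simp; ring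
  have key : (1+α)⁻¹ * (2 * (1+α)⁻¹ * ((1 - (1+α)⁻¹)^3)⁻¹ * (1 - (1+2*α)⁻¹)⁻¹)
      = (1+α) * (1+2*α) / α^4 := by
    rw [e1, e2]
    field_simp
  rw [key, div_le_div_iff₀ (by positivity) (by positivity)]
  have p1 : (1+α) * (1+2*α) ≤ (1+2*α)^2 := by nlinarith
  have p2 : (1+2*α)^2 ≤ (1+2*α)^4 := pow_le_pow_right₀ (by linarith) (by norm_num)
  exact mul_le_mul_of_nonneg_right (p1.trans p2) (by positivity)

lemma numericB {α : ℝ} (hα : 0 < α) :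
    2 * (1+α)⁻¹ * ((1 - (1+α)⁻¹)^3)⁻¹ * (1 - (1+2*α)⁻¹)⁻¹
      ≤ (1 + 2*α)^5 / α^4 := by
  have h1 : (0:ℝ) < 1 + α := by linarith
  have h2 : (0:ℝ) < 1 + 2*α := by linarith
  have e1 : 1 - (1+α)⁻¹ = α / (1+α) := by field_simp; ring
  have e2 : 1 - (1+2*α)⁻¹ = (2*α) / (1+2*α) := by field_simp; ring
  have key : 2 * (1+α)⁻¹ * ((1 - (1+α)⁻¹)^3)⁻¹ * (1 - (1+2*α)⁻¹)⁻¹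
      = (1+α)^2 * (1+2*α) / α^4 := by
    rw [e1, e2]
    field_simp
  rw [key, div_le_div_iff₀ (by positivity) (by positivity)]
  have q : (1+α)^2 ≤ (1+2*α)^2 := by nlinarith
  have p1 : (1+α)^2 * (1+2*α) ≤ (1+2*α)^3 := by nlinarith [mul_le_mul_of_nonneg_right q h2.le]
  have p2 : (1+2*α)^3 ≤ (1+2*α)^5 := pow_le_pow_right₀ (by linarith) (by norm_num)
  exact mul_le_mul_of_nonneg_right (p1.trans p2) (by positivity)

end Aux

/-- If `(T_k)` are random times with `T_0 = 0` and i.i.d. rate-1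
exponential increments, `α > 0`, `n ≥ 1`, and for `1 ≤ k ≤ n`,
`A_k = Σ_{l=k}^n Σ_{m=k}^l Σ_{j=1}^k e^{α(T_k−T_l)} e^{α(T_m−T_l)} e^{α(T_j−T_k)} (T_m−T_j)`,
`B_k = Σ_{l=k}^n Σ_{m=k}^l Σ_{j=1}^k e^{α(T_k−T_l)} e^{α(T_m−T_l)} e^{α(T_j−T_k)} (m−j)`,
then `max_{2≤k≤n} E[A_k] ≤ (1+2α)⁴/α⁴` and `max_{1≤k≤n} E[B_k] ≤ (1+2α)⁵/α⁴`. -/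
theorem triple_sum_expectation_bounds {Ω : Type*} [MeasurableSpace Ω] (μ : Measure Ω)
    [IsProbabilityMeasure μ]
    (T : ℕ → Ω → ℝ) (hT0 : ∀ ω, T 0 ω = 0) (hTmeas : ∀ k, Measurable (T k))
    (hindep : iIndepFun
      (fun k ω => T (k + 1) ω - T k ω) μ)
    (hexp : ∀ k, Measure.map (fun ω => T (k + 1) ω - T k ω) μ = expMeasure 1)
    (α : ℝ) (hα : 0 < α) (n : ℕ) (hn : 1 ≤ n) :
    (∀ k, 2 ≤ k → k ≤ n →
      ∫ ω, (∑ l ∈ Finset.Icc k n, ∑ m ∈ Finset.Icc k l, ∑ j ∈ Finset.Icc 1 k,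
          Real.exp (α * (T k ω - T l ω)) * Real.exp (α * (T m ω - T l ω))
            * Real.exp (α * (T j ω - T k ω)) * (T m ω - T j ω)) ∂μ
        ≤ (1 + 2 * α) ^ 4 / α ^ 4) ∧
    (∀ k, 1 ≤ k → k ≤ n →
      ∫ ω, (∑ l ∈ Finset.Icc k n, ∑ m ∈ Finset.Icc k l, ∑ j ∈ Finset.Icc 1 k,
          Real.exp (α * (T k ω - T l ω)) * Real.exp (α * (T m ω - T l ω))
            * Real.exp (α * (T j ω - T k ω)) * ((m : ℝ) - (j : ℝ))) ∂μ
        ≤ (1 + 2 * α) ^ 5 / α ^ 4) := by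
  classical
  set X : ℕ → Ω → ℝ := fun i ω => T (i + 1) ω - T i ω with hXdef
  have hXm : ∀ i, Measurable (X i) := fun i => (hTmeas _).sub (hTmeas _)
  set g : ℕ → ℕ → ℕ → ℝ → ℝ := fun m i0 i t =>
      (if i = i0 then t else 1) * Real.exp (-(α * (if i < m then 1 else 2) * t)) with hgdef
  have hgm : ∀ m i0 i, Measurable (g m i0 i) := by
    intro m i0 i
    apply Measurable.mul
    · split_ifs
      exacts [measurable_id, measurable_const]
    · fun_prop
  have hcpos : ∀ (m i : ℕ), 0 < α * (if i < m then (1:ℝ) else 2) := by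
    intro m i; split_ifs <;> linarith
  have hgint : ∀ m i0 i, Integrable (fun ω => g m i0 i (X i ω)) μ := by
    intro m i0 i
    have h2 : Integrable (g m i0 i) (Measure.map (fun ω => T (i+1) ω - T i ω) μ) := by
      rw [hexp i]
      by_cases h : i = i0
      · subst h
        simp only [hgdef, if_pos rfl]
        exact integrable_id_exp_expMeasure (hcpos m i)
      · simp only [hgdef, if_neg h, one_mul]
        exact integrable_exp_expMeasure (hcpos m i)
    have := (integrable_map_measure ((hgm m i0 i).aestronglyMeasurable)
      ((hXm i).aemeasurable)).mp h2
    exact this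
  have hgval : ∀ m i0 i, (∫ ω, g m i0 i (X i ω) ∂μ)
      = if i = i0 then ((1 + α * (if i < m then (1:ℝ) else 2))^2)⁻¹
        else (1 + α * (if i < m then (1:ℝ) else 2))⁻¹ := by
    intro m i0 i
    have h1 : ∫ ω, g m i0 i (X i ω) ∂μ = ∫ t, g m i0 i t ∂(expMeasure 1) := by
      rw [← hexp i, integral_map ((hXm i).aemeasurable) ((hgm m i0 i).aestronglyMeasurable)]
    rw [h1]
    by_cases h : i = i0
    · subst h
      simp only [hgdef, if_pos rfl]
      exact moment1 (hcpos m i)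
    · simp only [hgdef, if_neg h, one_mul]
      exact moment0 (hcpos m i)
  have core : ∀ (j m l i0 : ℕ), j ≤ m → m ≤ l → (i0 < m ∨ l ≤ i0) →
      Integrable (fun ω => ∏ i ∈ Finset.Ico j l, g m i0 i (X i ω)) μ ∧
      ∫ ω, ∏ i ∈ Finset.Ico j l, g m i0 i (X i ω) ∂μ
        = ((1+α)⁻¹)^(m-j) * (if i0 ∈ Finset.Ico j m then (1+α)⁻¹ else 1)
            * ((1+2*α)⁻¹)^(l-m) := by
    intro j m l i0 hjm hml hi0
    have hind2 : iIndepFun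
        (fun i ω => g m i0 i (X i ω)) μ := hindep.comp (g m i0) (hgm m i0)
    obtain ⟨hIcore, hEcore⟩ := indep_prod_integral hind2
      (fun i => (hgm m i0 i).comp (hXm i)) (Finset.Ico j l) (fun i _ => hgint m i0 i)
    refine ⟨hIcore, ?_⟩
    rw [hEcore, Finset.prod_congr rfl (fun i _ => hgval m i0 i),
      ← Finset.prod_Ico_consecutive _ hjm hml]
    have hpart1 : (∏ i ∈ Finset.Ico j m,
        (if i = i0 then ((1 + α * (if i < m then (1:ℝ) else 2))^2)⁻¹
          else (1 + α * (if i < m then (1:ℝ) else 2))⁻¹))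
        = ((1+α)⁻¹)^(m-j) * (if i0 ∈ Finset.Ico j m then (1+α)⁻¹ else 1) := by
      have h1 : ∀ i ∈ Finset.Ico j m,
          (if i = i0 then ((1 + α * (if i < m then (1:ℝ) else 2))^2)⁻¹
            else (1 + α * (if i < m then (1:ℝ) else 2))⁻¹)
          = (1+α)⁻¹ * (if i = i0 then (1+α)⁻¹ else 1) := by
        intro i hi
        rw [if_pos (Finset.mem_Ico.mp hi).2, mul_one]
        split_ifs with h
        · rw [sq, mul_inv]
        · rw [mul_one]
      rw [Finset.prod_congr rfl h1, Finset.prod_mul_distrib, Finset.prod_const,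
        Nat.card_Ico, Finset.prod_ite_eq']
    have hpart2 : (∏ i ∈ Finset.Ico m l,
        (if i = i0 then ((1 + α * (if i < m then (1:ℝ) else 2))^2)⁻¹
          else (1 + α * (if i < m then (1:ℝ) else 2))⁻¹))
        = ((1+2*α)⁻¹)^(l-m) := by
      have h1 : ∀ i ∈ Finset.Ico m l,
          (if i = i0 then ((1 + α * (if i < m then (1:ℝ) else 2))^2)⁻¹
            else (1 + α * (if i < m then (1:ℝ) else 2))⁻¹)
          = (1+2*α)⁻¹ := by
        intro i hi
        obtain ⟨h2, h3⟩ := Finset.mem_Ico.mp hi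
        rw [if_neg (by omega), if_neg (by omega)]
        ring_nf
      rw [Finset.prod_congr rfl h1, Finset.prod_const, Nat.card_Ico]
    rw [hpart1, hpart2]
  have htel : ∀ (a b : ℕ), a ≤ b → ∀ ω, T b ω - T a ω = ∑ i ∈ Finset.Ico a b, X i ω := by
    intro a b hab ω
    rw [Finset.sum_Ico_eq_sub _ hab,
      Finset.sum_range_sub (fun i => T i ω), Finset.sum_range_sub (fun i => T i ω)]
    ring
  have hexpprod : ∀ (k j m l : ℕ), j ≤ k → k ≤ m → m ≤ l → ∀ ω,
      Real.exp (α * (T k ω - T l ω)) * Real.exp (α * (T m ω - T l ω))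
        * Real.exp (α * (T j ω - T k ω))
      = ∏ i ∈ Finset.Ico j l, Real.exp (-(α * (if i < m then (1:ℝ) else 2) * X i ω)) := by
    intro k j m l hjk hkm hml ω
    rw [← Real.exp_sum, ← Real.exp_add, ← Real.exp_add]
    congr 1
    have hsplit : ∑ i ∈ Finset.Ico j l, -(α * (if i < m then (1:ℝ) else 2) * X i ω)
        = (∑ i ∈ Finset.Ico j m, -(α * X i ω))
          + ∑ i ∈ Finset.Ico m l, -(α * 2 * X i ω) := by
      rw [← Finset.sum_Ico_consecutive _ (le_trans hjk hkm) hml]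
      congr 1
      · exact Finset.sum_congr rfl fun i hi => by
          rw [if_pos (Finset.mem_Ico.mp hi).2, mul_one]
      · refine Finset.sum_congr rfl fun i hi => ?_
        have hge := (Finset.mem_Ico.mp hi).1
        rw [if_neg (by omega : ¬ i < m)]
    have s1 : -(α * (T m ω - T j ω)) = ∑ i ∈ Finset.Ico j m, -(α * X i ω) := by
      rw [htel j m (hjk.trans hkm) ω, Finset.mul_sum, ← Finset.sum_neg_distrib]
    have s2 : -(α * 2 * (T l ω - T m ω)) = ∑ i ∈ Finset.Ico m l, -(α * 2 * X i ω) := by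
      rw [htel m l hml ω, Finset.mul_sum, ← Finset.sum_neg_distrib]
    rw [hsplit, ← s1, ← s2]
    ring
  have htermA : ∀ (k j m l : ℕ), j ≤ k → k ≤ m → m ≤ l →
      Integrable (fun ω => Real.exp (α * (T k ω - T l ω)) * Real.exp (α * (T m ω - T l ω))
        * Real.exp (α * (T j ω - T k ω)) * (T m ω - T j ω)) μ ∧
      ∫ ω, Real.exp (α * (T k ω - T l ω)) * Real.exp (α * (T m ω - T l ω))
        * Real.exp (α * (T j ω - T k ω)) * (T m ω - T j ω) ∂μ
      = ((m - j : ℕ) : ℝ) * (((1+α)⁻¹)^(m-j) * (1+α)⁻¹ * ((1+2*α)⁻¹)^(l-m)) := by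
    intro k j m l hjk hkm hml
    have hjm : j ≤ m := hjk.trans hkm
    have hpt : ∀ ω, Real.exp (α * (T k ω - T l ω)) * Real.exp (α * (T m ω - T l ω))
        * Real.exp (α * (T j ω - T k ω)) * (T m ω - T j ω)
        = ∑ i0 ∈ Finset.Ico j m, ∏ i ∈ Finset.Ico j l, g m i0 i (X i ω) := by
      intro ω
      rw [hexpprod k j m l hjk hkm hml ω, htel j m hjm ω, mul_comm, Finset.sum_mul]
      refine Finset.sum_congr rfl fun i0 hi0 => ?_
      have hsplitg : ∏ i ∈ Finset.Ico j l, g m i0 i (X i ω)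
          = (∏ i ∈ Finset.Ico j l, (if i = i0 then X i ω else 1))
            * ∏ i ∈ Finset.Ico j l, Real.exp (-(α * (if i < m then (1:ℝ) else 2) * X i ω)) := by
        rw [← Finset.prod_mul_distrib]
      rw [hsplitg, Finset.prod_ite_eq', if_pos]
      have := Finset.mem_Ico.mp hi0
      exact Finset.mem_Ico.mpr ⟨this.1, lt_of_lt_of_le this.2 hml⟩
    have hintA : ∀ i0 ∈ Finset.Ico j m,
        Integrable (fun ω => ∏ i ∈ Finset.Ico j l, g m i0 i (X i ω)) μ := fun i0 hi0 =>
      (core j m l i0 hjm hml (Or.inl (Finset.mem_Ico.mp hi0).2)).1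
    constructor
    · rw [show (fun ω => Real.exp (α * (T k ω - T l ω)) * Real.exp (α * (T m ω - T l ω))
        * Real.exp (α * (T j ω - T k ω)) * (T m ω - T j ω))
        = fun ω => ∑ i0 ∈ Finset.Ico j m, ∏ i ∈ Finset.Ico j l, g m i0 i (X i ω)
        from funext hpt]
      exact integrable_finset_sum _ hintA
    · calc ∫ ω, Real.exp (α * (T k ω - T l ω)) * Real.exp (α * (T m ω - T l ω))
          * Real.exp (α * (T j ω - T k ω)) * (T m ω - T j ω) ∂μ
          = ∫ ω, ∑ i0 ∈ Finset.Ico j m, ∏ i ∈ Finset.Ico j l, g m i0 i (X i ω) ∂μ :=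
            integral_congr_ae (Filter.Eventually.of_forall hpt)
      _ = ∑ i0 ∈ Finset.Ico j m, ∫ ω, ∏ i ∈ Finset.Ico j l, g m i0 i (X i ω) ∂μ :=
            integral_finset_sum _ hintA
      _ = ∑ i0 ∈ Finset.Ico j m, (((1+α)⁻¹)^(m-j) * (1+α)⁻¹ * ((1+2*α)⁻¹)^(l-m)) := by
            refine Finset.sum_congr rfl fun i0 hi0 => ?_
            rw [(core j m l i0 hjm hml (Or.inl (Finset.mem_Ico.mp hi0).2)).2, if_pos hi0]
      _ = ((m - j : ℕ) : ℝ) * (((1+α)⁻¹)^(m-j) * (1+α)⁻¹ * ((1+2*α)⁻¹)^(l-m)) := by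
            rw [Finset.sum_const, Nat.card_Ico, nsmul_eq_mul]
  have htermB : ∀ (k j m l : ℕ), j ≤ k → k ≤ m → m ≤ l →
      Integrable (fun ω => Real.exp (α * (T k ω - T l ω)) * Real.exp (α * (T m ω - T l ω))
        * Real.exp (α * (T j ω - T k ω)) * ((m:ℝ) - (j:ℝ))) μ ∧
      ∫ ω, Real.exp (α * (T k ω - T l ω)) * Real.exp (α * (T m ω - T l ω))
        * Real.exp (α * (T j ω - T k ω)) * ((m:ℝ) - (j:ℝ)) ∂μ
      = ((m - j : ℕ) : ℝ) * (((1+α)⁻¹)^(m-j) * ((1+2*α)⁻¹)^(l-m)) := by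
    intro k j m l hjk hkm hml
    have hjm : j ≤ m := hjk.trans hkm
    have hlni : l ∉ Finset.Ico j m := by
      simp only [Finset.mem_Ico, not_and, not_lt]
      intro _; exact hml
    have hpt : ∀ ω, Real.exp (α * (T k ω - T l ω)) * Real.exp (α * (T m ω - T l ω))
        * Real.exp (α * (T j ω - T k ω)) * ((m:ℝ) - (j:ℝ))
        = ((m:ℝ) - (j:ℝ)) * ∏ i ∈ Finset.Ico j l, g m l i (X i ω) := by
      intro ω
      rw [hexpprod k j m l hjk hkm hml ω, mul_comm]
      congr 1
      refine Finset.prod_congr rfl fun i hi => ?_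
      have : i ≠ l := by have := Finset.mem_Ico.mp hi; omega
      simp only [hgdef, if_neg this, one_mul]
    have hcore := core j m l l hjm hml (Or.inr le_rfl)
    constructor
    · rw [show (fun ω => Real.exp (α * (T k ω - T l ω)) * Real.exp (α * (T m ω - T l ω))
        * Real.exp (α * (T j ω - T k ω)) * ((m:ℝ) - (j:ℝ)))
        = fun ω => ((m:ℝ) - (j:ℝ)) * ∏ i ∈ Finset.Ico j l, g m l i (X i ω)
        from funext hpt]
      exact hcore.1.const_mul _
    · calc ∫ ω, Real.exp (α * (T k ω - T l ω)) * Real.exp (α * (T m ω - T l ω))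
          * Real.exp (α * (T j ω - T k ω)) * ((m:ℝ) - (j:ℝ)) ∂μ
          = ∫ ω, ((m:ℝ) - (j:ℝ)) * ∏ i ∈ Finset.Ico j l, g m l i (X i ω) ∂μ :=
            integral_congr_ae (Filter.Eventually.of_forall hpt)
      _ = ((m:ℝ) - (j:ℝ)) * ∫ ω, ∏ i ∈ Finset.Ico j l, g m l i (X i ω) ∂μ :=
            integral_const_mul _ _
      _ = ((m - j : ℕ) : ℝ) * (((1+α)⁻¹)^(m-j) * ((1+2*α)⁻¹)^(l-m)) := by
            rw [hcore.2, if_neg hlni, mul_one, Nat.cast_sub hjm]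
  have hx0 : (0:ℝ) ≤ (1+α)⁻¹ := by positivity
  have hx1 : (1+α)⁻¹ < 1 := by
    rw [inv_lt_one₀ (by linarith : (0:ℝ) < 1 + α)]; linarith
  have hy0 : (0:ℝ) ≤ (1+2*α)⁻¹ := by positivity
  have hy1 : (1+2*α)⁻¹ < 1 := by
    rw [inv_lt_one₀ (by linarith : (0:ℝ) < 1 + 2*α)]; linarith
  constructor
  · intro k hk2 hkn
    have hk1 : 1 ≤ k := by omega
    have hintA : ∀ l ∈ Finset.Icc k n, ∀ m ∈ Finset.Icc k l, ∀ j ∈ Finset.Icc 1 k,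
        Integrable (fun ω => Real.exp (α * (T k ω - T l ω)) * Real.exp (α * (T m ω - T l ω))
          * Real.exp (α * (T j ω - T k ω)) * (T m ω - T j ω)) μ := by
      intro l hl m hm j hj
      exact (htermA k j m l (Finset.mem_Icc.mp hj).2 (Finset.mem_Icc.mp hm).1
        (Finset.mem_Icc.mp hm).2).1
    calc ∫ ω, (∑ l ∈ Finset.Icc k n, ∑ m ∈ Finset.Icc k l, ∑ j ∈ Finset.Icc 1 k,
          Real.exp (α * (T k ω - T l ω)) * Real.exp (α * (T m ω - T l ω))
            * Real.exp (α * (T j ω - T k ω)) * (T m ω - T j ω)) ∂μ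
        = ∑ l ∈ Finset.Icc k n, ∑ m ∈ Finset.Icc k l, ∑ j ∈ Finset.Icc 1 k,
            (((m - j : ℕ) : ℝ) * (((1+α)⁻¹)^(m-j) * (1+α)⁻¹ * ((1+2*α)⁻¹)^(l-m))) := by
          rw [integral_finset_sum _ (fun l hl => integrable_finset_sum _ fun m hm =>
            integrable_finset_sum _ fun j hj => hintA l hl m hm j hj)]
          refine Finset.sum_congr rfl fun l hl => ?_
          rw [integral_finset_sum _ (fun m hm =>
            integrable_finset_sum _ fun j hj => hintA l hl m hm j hj)]
          refine Finset.sum_congr rfl fun m hm => ?_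
          rw [integral_finset_sum _ (fun j hj => hintA l hl m hm j hj)]
          refine Finset.sum_congr rfl fun j hj => ?_
          exact (htermA k j m l (Finset.mem_Icc.mp hj).2 (Finset.mem_Icc.mp hm).1
            (Finset.mem_Icc.mp hm).2).2
      _ = (1+α)⁻¹ * ∑ l ∈ Finset.Icc k n, ∑ m ∈ Finset.Icc k l, ∑ j ∈ Finset.Icc 1 k,
            (((m:ℝ) - (j:ℝ)) * ((1+α)⁻¹) ^ (m - j) * ((1+2*α)⁻¹) ^ (l - m)) := by
          simp_rw [Finset.mul_sum]
          refine Finset.sum_congr rfl fun l hl => Finset.sum_congr rfl fun m hm =>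
            Finset.sum_congr rfl fun j hj => ?_
          have hjm : j ≤ m := le_trans (Finset.mem_Icc.mp hj).2 (Finset.mem_Icc.mp hm).1
          rw [Nat.cast_sub hjm]
          ring
      _ ≤ (1+α)⁻¹ * (2 * (1+α)⁻¹ * ((1 - (1+α)⁻¹)^3)⁻¹ * (1 - (1+2*α)⁻¹)⁻¹) :=
          mul_le_mul_of_nonneg_left (sum_bound hx0 hx1 hy0 hy1 k n hk1) hx0
      _ ≤ (1 + 2 * α) ^ 4 / α ^ 4 := numericA hα
  · intro k hk1 hkn
    have hintB : ∀ l ∈ Finset.Icc k n, ∀ m ∈ Finset.Icc k l, ∀ j ∈ Finset.Icc 1 k,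
        Integrable (fun ω => Real.exp (α * (T k ω - T l ω)) * Real.exp (α * (T m ω - T l ω))
          * Real.exp (α * (T j ω - T k ω)) * ((m:ℝ) - (j:ℝ))) μ := by
      intro l hl m hm j hj
      exact (htermB k j m l (Finset.mem_Icc.mp hj).2 (Finset.mem_Icc.mp hm).1
        (Finset.mem_Icc.mp hm).2).1
    calc ∫ ω, (∑ l ∈ Finset.Icc k n, ∑ m ∈ Finset.Icc k l, ∑ j ∈ Finset.Icc 1 k,
          Real.exp (α * (T k ω - T l ω)) * Real.exp (α * (T m ω - T l ω))
            * Real.exp (α * (T j ω - T k ω)) * ((m:ℝ) - (j:ℝ))) ∂μ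
        = ∑ l ∈ Finset.Icc k n, ∑ m ∈ Finset.Icc k l, ∑ j ∈ Finset.Icc 1 k,
            (((m - j : ℕ) : ℝ) * (((1+α)⁻¹)^(m-j) * ((1+2*α)⁻¹)^(l-m))) := by
          rw [integral_finset_sum _ (fun l hl => integrable_finset_sum _ fun m hm =>
            integrable_finset_sum _ fun j hj => hintB l hl m hm j hj)]
          refine Finset.sum_congr rfl fun l hl => ?_
          rw [integral_finset_sum _ (fun m hm =>
            integrable_finset_sum _ fun j hj => hintB l hl m hm j hj)]
          refine Finset.sum_congr rfl fun m hm => ?_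
          rw [integral_finset_sum _ (fun j hj => hintB l hl m hm j hj)]
          refine Finset.sum_congr rfl fun j hj => ?_
          exact (htermB k j m l (Finset.mem_Icc.mp hj).2 (Finset.mem_Icc.mp hm).1
            (Finset.mem_Icc.mp hm).2).2
      _ = ∑ l ∈ Finset.Icc k n, ∑ m ∈ Finset.Icc k l, ∑ j ∈ Finset.Icc 1 k,
            (((m:ℝ) - (j:ℝ)) * ((1+α)⁻¹) ^ (m - j) * ((1+2*α)⁻¹) ^ (l - m)) := by
          refine Finset.sum_congr rfl fun l hl => Finset.sum_congr rfl fun m hm =>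
            Finset.sum_congr rfl fun j hj => ?_
          have hjm : j ≤ m := le_trans (Finset.mem_Icc.mp hj).2 (Finset.mem_Icc.mp hm).1
          rw [Nat.cast_sub hjm]
          ring
      _ ≤ 2 * (1+α)⁻¹ * ((1 - (1+α)⁻¹)^3)⁻¹ * (1 - (1+2*α)⁻¹)⁻¹ :=
          sum_bound hx0 hx1 hy0 hy1 k n hk1
      _ ≤ (1 + 2 * α) ^ 5 / α ^ 4 := numericB hα
end

section
/- Let (T_k) be random times with T_0 = 0 and i.i.d. rate-1 exponential increments, and let α > 0, n ≥ 1. Then E[ Σ_{i=1}^n ( Σ_{j=1}^i α e^{−α(T_i − T_j)} )² ] ≤ (1 + (3/2)α)(1 + 2α) n. -/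
open MeasureTheory ProbabilityTheory Real Set

lemma pwsub_exponentialPDF_measurable (r : ℝ) : Measurable (exponentialPDF r) :=
  (measurable_exponentialPDFReal r).ennreal_ofReal

lemma pwsub_laplace_expMeasure {c : ℝ} (hc : 0 ≤ c) :
    ∫ y, Real.exp (-(c * y)) ∂(expMeasure 1) = (1 + c)⁻¹ := by
  have hb : (0:ℝ) < 1 + c := by linarith
  have hmeas : Measurable fun y : ℝ => Real.exp (-(c * y)) :=
    ((measurable_id.const_mul c).neg).exp
  rw [integral_eq_lintegral_of_nonneg_ae (ae_of_all _ fun y => (Real.exp_pos _).le)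
    hmeas.aestronglyMeasurable]
  have hwd : expMeasure 1 = volume.withDensity (exponentialPDF 1) := rfl
  have key : ∫⁻ y, ENNReal.ofReal (Real.exp (-(c * y))) ∂(expMeasure 1)
      = ENNReal.ofReal ((1 + c)⁻¹) := by
    rw [hwd, lintegral_withDensity_eq_lintegral_mul _ (pwsub_exponentialPDF_measurable 1)
      hmeas.ennreal_ofReal]
    have hpt : ∀ y : ℝ, (exponentialPDF 1 * fun y => ENNReal.ofReal (Real.exp (-(c * y)))) y
        = ENNReal.ofReal ((1 + c)⁻¹) * exponentialPDF (1 + c) y := by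
      intro y
      simp only [Pi.mul_apply]
      rcases le_or_gt 0 y with hy | hy
      · rw [exponentialPDF_of_nonneg hy, exponentialPDF_of_nonneg hy,
          ← ENNReal.ofReal_mul (by positivity), ← ENNReal.ofReal_mul (by positivity)]
        congr 1
        rw [one_mul, ← Real.exp_add]
        rw [show ((1+c)⁻¹ * ((1+c) * rexp (-((1+c)*y))) : ℝ)
            = ((1+c)⁻¹ * (1+c)) * rexp (-((1+c)*y)) by ring, inv_mul_cancel₀ hb.ne', one_mul]
        ring_nf
      · rw [exponentialPDF_of_neg hy, exponentialPDF_of_neg hy, zero_mul, mul_zero]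
    rw [lintegral_congr hpt, lintegral_const_mul _ (pwsub_exponentialPDF_measurable (1 + c)),
      lintegral_exponentialPDF_eq_one hb, mul_one]
  rw [key, ENNReal.toReal_ofReal (by positivity)]

lemma pwsub_integral_exp_neg {Ω : Type*} [MeasurableSpace Ω] {μ : Measure Ω} {X : Ω → ℝ}
    (hX : Measurable X) (hmap : μ.map X = expMeasure 1) {c : ℝ} (hc : 0 ≤ c) :
    ∫ ω, Real.exp (-(c * X ω)) ∂μ = (1 + c)⁻¹ := by
  have hmeas : Measurable fun y : ℝ => Real.exp (-(c * y)) :=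
    ((measurable_id.const_mul c).neg).exp
  have h := integral_map (μ := μ) (φ := X) hX.aemeasurable
    (f := fun y : ℝ => Real.exp (-(c * y)))
    (by rw [hmap]; exact hmeas.aestronglyMeasurable)
  rw [← h, hmap, pwsub_laplace_expMeasure hc]

lemma pwsub_ae_nonneg {Ω : Type*} [MeasurableSpace Ω] {μ : Measure Ω} {X : Ω → ℝ}
    (hX : Measurable X) (hmap : μ.map X = expMeasure 1) : 0 ≤ᵐ[μ] X := by
  have h0 : expMeasure 1 (Set.Iio 0) = 0 := by
    rw [show expMeasure 1 = volume.withDensity (exponentialPDF 1) from rfl,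
      withDensity_apply _ measurableSet_Iio]
    exact lintegral_exponentialPDF_of_nonpos le_rfl
  have hpre : μ (X ⁻¹' Set.Iio 0) = 0 := by
    rw [← Measure.map_apply hX measurableSet_Iio, hmap]; exact h0
  refine (ae_iff).mpr ?_
  simp only [Pi.zero_apply, not_le]; exact hpre

lemma pwsub_laplace_sum {Ω : Type*} [MeasurableSpace Ω] (μ : Measure Ω) [IsProbabilityMeasure μ]
    (X : ℕ → Ω → ℝ) (hXm : ∀ m, Measurable (X m))
    (hind : iIndepFun X μ)
    (hmap : ∀ m, Measure.map (X m) μ = expMeasure 1)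
    (c : ℕ → ℝ) (hc : ∀ m, 0 ≤ c m) (s : Finset ℕ) :
    ∫ ω, Real.exp (-(∑ m ∈ s, c m * X m ω)) ∂μ = ∏ m ∈ s, (1 + c m)⁻¹ := by
  classical
  induction s using Finset.induction_on with
  | empty => simp
  | @insert a s ha IH =>
    have hY : iIndepFun (fun m ω => c m * X m ω) μ :=
      hind.comp (fun m x => c m * x) (fun m => measurable_id.const_mul _)
    have hYm : ∀ m, Measurable fun ω => c m * X m ω := fun m => (hXm m).const_mul _
    have hI : IndepFun (∑ m ∈ s, fun ω => c m * X m ω) (fun ω => c a * X a ω) μ :=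
      hY.indepFun_finsetSum_of_notMem hYm ha
    have hsum : (∑ m ∈ s, fun ω => c m * X m ω) = fun ω => ∑ m ∈ s, c m * X m ω := by
      funext ω; simp [Finset.sum_apply]
    rw [hsum] at hI
    have hIe : IndepFun (fun ω => Real.exp (-(c a * X a ω)))
        (fun ω => Real.exp (-(∑ m ∈ s, c m * X m ω))) μ :=
      (hI.comp measurable_neg.exp measurable_neg.exp).symm
    have hmeas1 : Measurable fun ω => Real.exp (-(c a * X a ω)) := (hYm a).neg.exp
    have hmeas2 : Measurable fun ω => Real.exp (-(∑ m ∈ s, c m * X m ω)) :=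
      ((Finset.measurable_sum s fun m _ => hYm m).neg).exp
    have key : ∀ ω, Real.exp (-(∑ m ∈ insert a s, c m * X m ω))
        = Real.exp (-(c a * X a ω)) * Real.exp (-(∑ m ∈ s, c m * X m ω)) := by
      intro ω; rw [Finset.sum_insert ha, neg_add, Real.exp_add]
    simp_rw [key]
    rw [hIe.integral_fun_mul_eq_mul_integral hmeas1.aestronglyMeasurable hmeas2.aestronglyMeasurable,
      Finset.prod_insert ha, IH, pwsub_integral_exp_neg (hXm a) (hmap a) (hc a)]

lemma pwsub_telescope {Ω : Type*} (T : ℕ → Ω → ℝ) {j i : ℕ} (hji : j ≤ i) (ω : Ω) :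
    T i ω - T j ω = ∑ m ∈ Finset.Ico j i, (T (m + 1) ω - T m ω) := by
  induction i, hji using Nat.le_induction with
  | base => simp
  | succ i hji IH =>
    rw [Finset.sum_Ico_succ_top hji, ← IH]; ring

lemma pwsub_geom_tail {s : ℝ} (h0 : 0 ≤ s) (h1 : s < 1) (k : ℕ) :
    ∑ j ∈ Finset.Icc 1 k, s ^ (k - j) ≤ (1 - s)⁻¹ := by
  have hs : (0:ℝ) < 1 - s := by linarith
  induction k with
  | zero => simp [inv_nonneg.mpr hs.le]
  | succ k IH =>
    rw [Finset.sum_Icc_succ_top (Nat.le_add_left 1 k)]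
    have h2 : ∑ j ∈ Finset.Icc 1 k, s ^ (k + 1 - j) = (∑ j ∈ Finset.Icc 1 k, s ^ (k - j)) * s := by
      rw [Finset.sum_mul]
      refine Finset.sum_congr rfl fun j hj => ?_
      have hjk : j ≤ k := (Finset.mem_Icc.mp hj).2
      rw [← pow_succ]
      congr 1
      omega
    rw [h2, Nat.sub_self, pow_zero]
    have h3 : (∑ j ∈ Finset.Icc 1 k, s ^ (k - j)) * s ≤ (1 - s)⁻¹ * s :=
      mul_le_mul_of_nonneg_right IH h0
    have h4 : (1 - s)⁻¹ * s + 1 = (1 - s)⁻¹ := by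
      field_simp
      ring
    linarith

lemma pwsub_pair {Ω : Type*} [MeasurableSpace Ω] (μ : Measure Ω) [IsProbabilityMeasure μ]
    (T : ℕ → Ω → ℝ) (hTmeas : ∀ k, Measurable (T k))
    (hindep : iIndepFun
      (fun k ω => T (k + 1) ω - T k ω) μ)
    (hexp : ∀ k, Measure.map (fun ω => T (k + 1) ω - T k ω) μ = expMeasure 1)
    {α : ℝ} (hα : 0 < α) {j k i : ℕ} (hjk : j ≤ k) (hki : k ≤ i) :
    ∫ ω, Real.exp (-(α * (T i ω - T j ω))) * Real.exp (-(α * (T i ω - T k ω))) ∂μ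
      = ((1 + α)⁻¹) ^ (k - j) * ((1 + 2 * α)⁻¹) ^ (i - k) := by
  classical
  set X : ℕ → Ω → ℝ := fun m ω => T (m + 1) ω - T m ω with hXdef
  have hXm : ∀ m, Measurable (X m) := fun m => (hTmeas (m + 1)).sub (hTmeas m)
  set c : ℕ → ℝ := fun m => if m < k then α else 2 * α with hcdef
  have hc : ∀ m, 0 ≤ c m := by
    intro m; simp only [hcdef]; split <;> linarith
  have hpt : ∀ ω, Real.exp (-(α * (T i ω - T j ω))) * Real.exp (-(α * (T i ω - T k ω)))
      = Real.exp (-(∑ m ∈ Finset.Ico j i, c m * X m ω)) := by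
    intro ω
    rw [← Real.exp_add, ← neg_add]
    congr 1
    have e1 : α * (T i ω - T j ω) = ∑ m ∈ Finset.Ico j i, α * X m ω := by
      rw [pwsub_telescope T (hjk.trans hki) ω, Finset.mul_sum]
    have e2 : α * (T i ω - T k ω) = ∑ m ∈ Finset.Ico k i, α * X m ω := by
      rw [pwsub_telescope T hki ω, Finset.mul_sum]
    rw [e1, e2, ← Finset.sum_Ico_consecutive (fun m => α * X m ω) hjk hki,
      ← Finset.sum_Ico_consecutive (fun m => c m * X m ω) hjk hki]
    have h1 : ∑ m ∈ Finset.Ico j k, c m * X m ω = ∑ m ∈ Finset.Ico j k, α * X m ω :=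
      Finset.sum_congr rfl fun m hm => by
        simp only [hcdef, if_pos (Finset.mem_Ico.mp hm).2]
    have h2 : ∑ m ∈ Finset.Ico k i, c m * X m ω
        = ∑ m ∈ Finset.Ico k i, (α * X m ω + α * X m ω) :=
      Finset.sum_congr rfl fun m hm => by
        simp only [hcdef, if_neg (not_lt.mpr (Finset.mem_Ico.mp hm).1)]; ring
    rw [h1, h2, Finset.sum_add_distrib]
    ring
  simp_rw [hpt]
  rw [pwsub_laplace_sum μ X hXm hindep hexp c hc (Finset.Ico j i),
    ← Finset.prod_Ico_consecutive (fun m => (1 + c m)⁻¹) hjk hki]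
  have p1 : ∏ m ∈ Finset.Ico j k, (1 + c m)⁻¹ = ((1 + α)⁻¹) ^ (k - j) := by
    have hcg : ∀ m ∈ Finset.Ico j k, (1 + c m)⁻¹ = (1 + α)⁻¹ := fun m hm => by
      simp only [hcdef, if_pos (Finset.mem_Ico.mp hm).2]
    rw [Finset.prod_congr rfl hcg, Finset.prod_const, Nat.card_Ico]
  have p2 : ∏ m ∈ Finset.Ico k i, (1 + c m)⁻¹ = ((1 + 2 * α)⁻¹) ^ (i - k) := by
    have hcg : ∀ m ∈ Finset.Ico k i, (1 + c m)⁻¹ = (1 + 2 * α)⁻¹ := fun m hm => by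
      simp only [hcdef, if_neg (not_lt.mpr (Finset.mem_Ico.mp hm).1)]
    rw [Finset.prod_congr rfl hcg, Finset.prod_const, Nat.card_Ico]
  rw [p1, p2]

lemma pwsub_key {Ω : Type*} [MeasurableSpace Ω] (μ : Measure Ω) [IsProbabilityMeasure μ]
    (T : ℕ → Ω → ℝ) (hTmeas : ∀ k, Measurable (T k))
    (hindep : iIndepFun
      (fun k ω => T (k + 1) ω - T k ω) μ)
    (hexp : ∀ k, Measure.map (fun ω => T (k + 1) ω - T k ω) μ = expMeasure 1)
    {α : ℝ} (hα : 0 < α) (i : ℕ) :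
    ∫ ω, (∑ j ∈ Finset.Icc 1 i, α * Real.exp (-(α * (T i ω - T j ω)))) ^ 2 ∂μ
      ≤ (1 + α) * (1 + 2 * α) := by
  classical
  have hα1 : (0:ℝ) < 1 + α := by linarith
  have hα2 : (0:ℝ) < 1 + 2 * α := by linarith
  set s : ℝ := (1 + α)⁻¹ with hsdef
  set r : ℝ := (1 + 2 * α)⁻¹ with hrdef
  have hs0 : 0 ≤ s := by positivity
  have hr0 : 0 ≤ r := by positivity
  have hs1 : s < 1 := by
    rw [hsdef, inv_lt_one_iff₀]; right; linarith
  have hr1 : r < 1 := by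
    rw [hrdef, inv_lt_one_iff₀]; right; linarith
  -- a.e. nonnegativity of increments
  have hXnn : ∀ᵐ ω ∂μ, ∀ m : ℕ, 0 ≤ T (m + 1) ω - T m ω :=
    ae_all_iff.mpr fun m => pwsub_ae_nonneg ((hTmeas (m + 1)).sub (hTmeas m)) (hexp m)
  have hTd : ∀ᵐ ω ∂μ, ∀ p q : ℕ, q ≤ p → 0 ≤ T p ω - T q ω := by
    filter_upwards [hXnn] with ω hω p q hqp
    rw [pwsub_telescope T hqp ω]
    exact Finset.sum_nonneg fun m _ => hω m
  set A : ℕ → Ω → ℝ := fun j ω => α * Real.exp (-(α * (T i ω - T j ω))) with hAdef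
  have hAm : ∀ j, Measurable (A j) := fun j =>
    ((((hTmeas i).sub (hTmeas j)).const_mul α).neg.exp).const_mul α
  have hAbd : ∀ᵐ ω ∂μ, ∀ j, j ≤ i → 0 ≤ A j ω ∧ A j ω ≤ α := by
    filter_upwards [hTd] with ω hω j hji
    constructor
    · positivity
    · have h1 : Real.exp (-(α * (T i ω - T j ω))) ≤ 1 := by
        calc Real.exp (-(α * (T i ω - T j ω))) ≤ Real.exp 0 := by
              apply Real.exp_le_exp.mpr
              have := hω i j hji
              nlinarith
          _ = 1 := Real.exp_zero
      show α * Real.exp (-(α * (T i ω - T j ω))) ≤ α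
      nlinarith [Real.exp_pos (-(α * (T i ω - T j ω)))]
  have hInt2 : ∀ j k, j ≤ i → k ≤ i → Integrable (fun ω => A j ω * A k ω) μ := by
    intro j k hj hk
    refine Integrable.mono' (integrable_const (α * α))
      ((hAm j).mul (hAm k)).aestronglyMeasurable ?_
    filter_upwards [hAbd] with ω hω
    obtain ⟨hj0, hj1⟩ := hω j hj
    obtain ⟨hk0, hk1⟩ := hω k hk
    rw [Real.norm_eq_abs, abs_of_nonneg (mul_nonneg hj0 hk0)]
    exact mul_le_mul hj1 hk1 hk0 hα.le
  -- expand the square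
  have expand : ∀ ω, (∑ j ∈ Finset.Icc 1 i, A j ω) ^ 2
      = ∑ j ∈ Finset.Icc 1 i, ∑ k ∈ Finset.Icc 1 i, A j ω * A k ω := by
    intro ω; rw [sq, Finset.sum_mul_sum]
  change ∫ ω, (∑ j ∈ Finset.Icc 1 i, A j ω) ^ 2 ∂μ ≤ _
  simp_rw [expand]
  rw [integral_finset_sum _ (fun j hj => integrable_finset_sum _
    (fun k hk => hInt2 j k (Finset.mem_Icc.mp hj).2 (Finset.mem_Icc.mp hk).2))]
  have swap2 : ∀ j ∈ Finset.Icc 1 i, ∫ ω, ∑ k ∈ Finset.Icc 1 i, A j ω * A k ω ∂μ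
      = ∑ k ∈ Finset.Icc 1 i, ∫ ω, A j ω * A k ω ∂μ := fun j hj =>
    integral_finset_sum _ (fun k hk => hInt2 j k (Finset.mem_Icc.mp hj).2 (Finset.mem_Icc.mp hk).2)
  rw [Finset.sum_congr rfl swap2]
  -- value of each term
  have hval : ∀ j k, j ≤ k → k ≤ i → ∫ ω, A j ω * A k ω ∂μ
      = α ^ 2 * (s ^ (k - j) * r ^ (i - k)) := by
    intro j k hjk hki
    have hpt : ∀ ω, A j ω * A k ω = α ^ 2 *
        (Real.exp (-(α * (T i ω - T j ω))) * Real.exp (-(α * (T i ω - T k ω)))) := by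
      intro ω; simp only [hAdef]; ring
    simp_rw [hpt]
    rw [integral_const_mul, pwsub_pair μ T hTmeas hindep hexp hα hjk hki]
  set G : ℕ → ℕ → ℝ := fun j k => if j ≤ k then α ^ 2 * (s ^ (k - j) * r ^ (i - k)) else 0
    with hGdef
  have hGnn : ∀ j k, 0 ≤ G j k := by
    intro j k; simp only [hGdef]; split
    · positivity
    · exact le_rfl
  have hterm : ∀ j k, j ≤ i → k ≤ i → ∫ ω, A j ω * A k ω ∂μ ≤ G j k + G k j := by
    intro j k hj hk
    rcases le_or_gt j k with h | h
    · rw [hval j k h hk]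
      have : G j k = α ^ 2 * (s ^ (k - j) * r ^ (i - k)) := if_pos h
      rw [← this]
      exact le_add_of_nonneg_right (hGnn k j)
    · have hcomm : ∀ ω, A j ω * A k ω = A k ω * A j ω := fun ω => mul_comm _ _
      simp_rw [hcomm]
      rw [hval k j h.le hj]
      have : G k j = α ^ 2 * (s ^ (j - k) * r ^ (i - j)) := if_pos h.le
      rw [← this]
      exact le_add_of_nonneg_left (hGnn j k)
  calc ∑ j ∈ Finset.Icc 1 i, ∑ k ∈ Finset.Icc 1 i, ∫ ω, A j ω * A k ω ∂μ
      ≤ ∑ j ∈ Finset.Icc 1 i, ∑ k ∈ Finset.Icc 1 i, (G j k + G k j) := by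
        refine Finset.sum_le_sum fun j hj => Finset.sum_le_sum fun k hk =>
          hterm j k (Finset.mem_Icc.mp hj).2 (Finset.mem_Icc.mp hk).2
    _ = 2 * ∑ j ∈ Finset.Icc 1 i, ∑ k ∈ Finset.Icc 1 i, G j k := by
        simp_rw [Finset.sum_add_distrib]
        rw [Finset.sum_comm (f := fun j k => G k j)]
        ring
    _ ≤ 2 * (α ^ 2 * (1 - r)⁻¹ * (1 - s)⁻¹) := by
        have hstep : ∑ j ∈ Finset.Icc 1 i, ∑ k ∈ Finset.Icc 1 i, G j k
            ≤ α ^ 2 * (1 - r)⁻¹ * (1 - s)⁻¹ := by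
          rw [Finset.sum_comm]
          have hinner : ∀ k ∈ Finset.Icc 1 i, ∑ j ∈ Finset.Icc 1 i, G j k
              ≤ (α ^ 2 * (1 - s)⁻¹) * r ^ (i - k) := by
            intro k hk
            have hki : k ≤ i := (Finset.mem_Icc.mp hk).2
            have hfe : (Finset.Icc 1 i).filter (fun j => j ≤ k) = Finset.Icc 1 k := by
              ext m; simp only [Finset.mem_filter, Finset.mem_Icc]; omega
            have h1 : ∑ j ∈ Finset.Icc 1 i, G j k
                = ∑ j ∈ Finset.Icc 1 k, α ^ 2 * (s ^ (k - j) * r ^ (i - k)) := by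
              rw [hGdef, ← Finset.sum_filter, hfe]
            have h2 : ∑ j ∈ Finset.Icc 1 k, α ^ 2 * (s ^ (k - j) * r ^ (i - k))
                = (α ^ 2 * r ^ (i - k)) * ∑ j ∈ Finset.Icc 1 k, s ^ (k - j) := by
              rw [Finset.mul_sum]
              exact Finset.sum_congr rfl fun j _ => by ring
            rw [h1, h2]
            have h3 : (α ^ 2 * r ^ (i - k)) * (∑ j ∈ Finset.Icc 1 k, s ^ (k - j))
                ≤ (α ^ 2 * r ^ (i - k)) * (1 - s)⁻¹ :=
              mul_le_mul_of_nonneg_left (pwsub_geom_tail hs0 hs1 k) (by positivity)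
            calc (α ^ 2 * r ^ (i - k)) * (∑ j ∈ Finset.Icc 1 k, s ^ (k - j))
                ≤ (α ^ 2 * r ^ (i - k)) * (1 - s)⁻¹ := h3
              _ = (α ^ 2 * (1 - s)⁻¹) * r ^ (i - k) := by ring
          calc ∑ k ∈ Finset.Icc 1 i, ∑ j ∈ Finset.Icc 1 i, G j k
              ≤ ∑ k ∈ Finset.Icc 1 i, (α ^ 2 * (1 - s)⁻¹) * r ^ (i - k) :=
                Finset.sum_le_sum hinner
            _ = (α ^ 2 * (1 - s)⁻¹) * ∑ k ∈ Finset.Icc 1 i, r ^ (i - k) := by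
                rw [Finset.mul_sum]
            _ ≤ (α ^ 2 * (1 - s)⁻¹) * (1 - r)⁻¹ := by
                refine mul_le_mul_of_nonneg_left (pwsub_geom_tail hr0 hr1 i) ?_
                have : (0:ℝ) < 1 - s := by linarith
                positivity
            _ = α ^ 2 * (1 - r)⁻¹ * (1 - s)⁻¹ := by ring
        linarith
    _ = (1 + α) * (1 + 2 * α) := by
        have e1 : (1:ℝ) - s = α / (1 + α) := by
          rw [hsdef]; field_simp; ring
        have e2 : (1:ℝ) - r = 2 * α / (1 + 2 * α) := by
          rw [hrdef]; field_simp; ring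
        rw [e1, e2, inv_div, inv_div]
        field_simp

/-- If `(T_k)` are random times with `T_0 = 0` and i.i.d. rate-1
exponential increments, then for `α > 0` and `n ≥ 1`,
`E[∑_{i=1}^n (∑_{j=1}^i α e^{−α(T_i − T_j)})²] ≤ (1 + (3/2)α)(1 + 2α) n`. -/
theorem poisson_weight_sum_upper_bound {Ω : Type*} [MeasurableSpace Ω] (μ : Measure Ω)
    [IsProbabilityMeasure μ]
    (T : ℕ → Ω → ℝ) (hT0 : ∀ ω, T 0 ω = 0) (hTmeas : ∀ k, Measurable (T k))
    (hindep : iIndepFun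
      (fun k ω => T (k + 1) ω - T k ω) μ)
    (hexp : ∀ k, Measure.map (fun ω => T (k + 1) ω - T k ω) μ = expMeasure 1)
    (α : ℝ) (hα : 0 < α) (n : ℕ) (hn : 1 ≤ n) :
    ∫ ω, (∑ i ∈ Finset.Icc 1 n,
        (∑ j ∈ Finset.Icc 1 i, α * Real.exp (-(α * (T i ω - T j ω)))) ^ 2) ∂μ
      ≤ (1 + 3 / 2 * α) * (1 + 2 * α) * n := by
  classical
  have hXnn : ∀ᵐ ω ∂μ, ∀ m : ℕ, 0 ≤ T (m + 1) ω - T m ω :=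
    ae_all_iff.mpr fun m => pwsub_ae_nonneg ((hTmeas (m + 1)).sub (hTmeas m)) (hexp m)
  have hTd : ∀ᵐ ω ∂μ, ∀ p q : ℕ, q ≤ p → 0 ≤ T p ω - T q ω := by
    filter_upwards [hXnn] with ω hω p q hqp
    rw [pwsub_telescope T hqp ω]
    exact Finset.sum_nonneg fun m _ => hω m
  have hIntF : ∀ i : ℕ, Integrable
      (fun ω => (∑ j ∈ Finset.Icc 1 i, α * Real.exp (-(α * (T i ω - T j ω)))) ^ 2) μ := by
    intro i
    have hmeas : Measurable fun ω =>
        (∑ j ∈ Finset.Icc 1 i, α * Real.exp (-(α * (T i ω - T j ω)))) ^ 2 :=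
      (Finset.measurable_sum _ fun j _ =>
        ((((hTmeas i).sub (hTmeas j)).const_mul α).neg.exp).const_mul α).pow_const 2
    refine Integrable.mono' (integrable_const (((i : ℝ) * α) ^ 2))
      hmeas.aestronglyMeasurable ?_
    filter_upwards [hTd] with ω hω
    have hnn : 0 ≤ ∑ j ∈ Finset.Icc 1 i, α * Real.exp (-(α * (T i ω - T j ω))) :=
      Finset.sum_nonneg fun j _ => by positivity
    have hub : ∑ j ∈ Finset.Icc 1 i, α * Real.exp (-(α * (T i ω - T j ω))) ≤ (i : ℝ) * α := by
      calc ∑ j ∈ Finset.Icc 1 i, α * Real.exp (-(α * (T i ω - T j ω)))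
          ≤ ∑ _j ∈ Finset.Icc 1 i, α := by
            refine Finset.sum_le_sum fun j hj => ?_
            have h1 : Real.exp (-(α * (T i ω - T j ω))) ≤ 1 := by
              calc Real.exp (-(α * (T i ω - T j ω))) ≤ Real.exp 0 := by
                    apply Real.exp_le_exp.mpr
                    have := hω i j (Finset.mem_Icc.mp hj).2
                    nlinarith
                _ = 1 := Real.exp_zero
            nlinarith [Real.exp_pos (-(α * (T i ω - T j ω)))]
        _ = (i : ℝ) * α := by
            rw [Finset.sum_const, Nat.card_Icc, nsmul_eq_mul, Nat.add_sub_cancel]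
    rw [Real.norm_eq_abs, abs_of_nonneg (pow_nonneg hnn 2)]
    exact pow_le_pow_left₀ hnn hub 2
  rw [integral_finset_sum _ (fun i _ => hIntF i)]
  have hbd : ∀ i ∈ Finset.Icc 1 n,
      ∫ ω, (∑ j ∈ Finset.Icc 1 i, α * Real.exp (-(α * (T i ω - T j ω)))) ^ 2 ∂μ
        ≤ (1 + α) * (1 + 2 * α) := fun i _ => pwsub_key μ T hTmeas hindep hexp hα i
  calc ∑ i ∈ Finset.Icc 1 n,
        ∫ ω, (∑ j ∈ Finset.Icc 1 i, α * Real.exp (-(α * (T i ω - T j ω)))) ^ 2 ∂μ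
      ≤ ∑ _i ∈ Finset.Icc 1 n, (1 + α) * (1 + 2 * α) := Finset.sum_le_sum hbd
    _ = (n : ℝ) * ((1 + α) * (1 + 2 * α)) := by
        rw [Finset.sum_const, Nat.card_Icc, nsmul_eq_mul, Nat.add_sub_cancel]
    _ ≤ (1 + 3 / 2 * α) * (1 + 2 * α) * n := by
        have hn0 : (0 : ℝ) ≤ n := Nat.cast_nonneg n
        nlinarith [mul_nonneg hn0 (mul_nonneg hα.le (by linarith : (0:ℝ) ≤ 1 + 2 * α))]
end

section
/- Let (T_k) be random times with T_0 = 0 and i.i.d. rate-1 exponential increments, and let α > 0, n ≥ 1. Then E[ Σ_{i=1}^n ( Σ_{j=1}^i α e^{−α(T_i − T_j)} )² ] = ((2+α)(1+2α)/2)·n + ((1+2α)(1+(3/2)α)/(2α))·(1 − (1+2α)^{−n}) − (2(1+α)(1+2α)/α)·(1 − (1+α)^{−n}). -/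
open MeasureTheory ProbabilityTheory

section PoissonWeightAux
open Finset Real

lemma aux_lintegral_exp {t : ℝ} (ht : t ≤ 0) :
    ∫⁻ x, ENNReal.ofReal (Real.exp (t * x)) ∂(expMeasure 1) = ENNReal.ofReal (1 - t)⁻¹ := by
  have h1t : (0:ℝ) < 1 - t := by linarith
  have hmeas : Measurable fun x : ℝ => ENNReal.ofReal (Real.exp (t * x)) :=
    (Real.measurable_exp.comp (measurable_id.const_mul t)).ennreal_ofReal
  have hd : Measurable (exponentialPDF 1) := (measurable_exponentialPDFReal 1).ennreal_ofReal
  rw [show expMeasure 1 = MeasureTheory.volume.withDensity (exponentialPDF 1) from rfl,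
    lintegral_withDensity_eq_lintegral_mul _ hd hmeas]
  have hpt : ∀ x : ℝ, (exponentialPDF 1 * fun x => ENNReal.ofReal (Real.exp (t * x))) x
      = ENNReal.ofReal (1 - t)⁻¹ * exponentialPDF (1 - t) x := by
    intro x
    rcases le_or_gt 0 x with hx | hx
    · rw [Pi.mul_apply, exponentialPDF_of_nonneg hx, exponentialPDF_of_nonneg hx,
        ← ENNReal.ofReal_mul (by positivity), ← ENNReal.ofReal_mul (by positivity)]
      congr 1
      rw [one_mul, ← Real.exp_add]
      rw [show (1 - t)⁻¹ * ((1 - t) * Real.exp (-((1 - t) * x))) = Real.exp (-((1-t)*x)) by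
        field_simp]
      congr 1; ring
    · rw [Pi.mul_apply, exponentialPDF_of_neg hx, exponentialPDF_of_neg hx, zero_mul, mul_zero]
  simp only [hpt]
  rw [lintegral_const_mul _ (show Measurable (exponentialPDF (1-t)) from (measurable_exponentialPDFReal _).ennreal_ofReal),
    lintegral_exponentialPDF_eq_one h1t, mul_one]

lemma aux_integrable_exp {t : ℝ} (ht : t ≤ 0) :
    Integrable (fun x => Real.exp (t * x)) (expMeasure 1) := by
  refine ⟨(Real.continuous_exp.comp (continuous_const.mul continuous_id)).aestronglyMeasurable, ?_⟩
  rw [HasFiniteIntegral]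
  have : ∀ x : ℝ, ‖Real.exp (t * x)‖ₑ = ENNReal.ofReal (Real.exp (t * x)) :=
    fun x => Real.enorm_eq_ofReal (Real.exp_pos _).le
  simp only [this, aux_lintegral_exp ht]
  exact ENNReal.ofReal_lt_top

lemma aux_integral_exp {t : ℝ} (ht : t ≤ 0) :
    ∫ x, Real.exp (t * x) ∂(expMeasure 1) = (1 - t)⁻¹ := by
  have h1t : (0:ℝ) < 1 - t := by linarith
  rw [integral_eq_lintegral_of_nonneg_ae (Filter.Eventually.of_forall fun x => (Real.exp_pos _).le)
    (Continuous.aestronglyMeasurable (by continuity)),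
    aux_lintegral_exp ht, ENNReal.toReal_ofReal (by positivity)]


noncomputable def pwDterm (α : ℝ) (i j k : ℕ) : ℝ :=
  ((1+α)⁻¹) ^ (max j k - min j k) * ((1+2*α)⁻¹) ^ (i - max j k)

noncomputable def pwDsum (α : ℝ) (i : ℕ) : ℝ :=
  ∑ j ∈ Icc 1 i, ∑ k ∈ Icc 1 i, pwDterm α i j k

lemma pw_geom {α : ℝ} (hα : 0 < α) (i : ℕ) :
    ∑ d ∈ Icc 1 i, ((1+α)⁻¹) ^ d = (1 - ((1+α)⁻¹) ^ i) / α := by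
  induction i with
  | zero => simp
  | succ i ih =>
    have h1 : (1:ℝ) + α ≠ 0 := by positivity
    rw [Finset.sum_Icc_succ_top (by omega), ih, pow_succ ((1+α)⁻¹) i]
    field_simp
    ring
lemma pw_reflect (x : ℝ) (i : ℕ) :
    ∑ k ∈ Icc 1 i, x ^ (i + 1 - k) = ∑ d ∈ Icc 1 i, x ^ d := by
  refine Finset.sum_nbij' (fun k => i + 1 - k) (fun k => i + 1 - k) ?_ ?_ ?_ ?_
    (fun a ha => ?_)
  · intro a ha; simp only [Finset.mem_Icc] at *; omega
  · intro a ha; simp only [Finset.mem_Icc] at *; omega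
  · intro a ha; simp only [Finset.mem_Icc] at *; omega
  · intro a ha; simp only [Finset.mem_Icc] at *; omega
  · rfl

lemma pw_D_rec {α : ℝ} (hα : 0 < α) (i : ℕ) :
    pwDsum α (i+1) = (1+2*α)⁻¹ * pwDsum α i + 1 + 2 * ∑ d ∈ Icc 1 i, ((1+α)⁻¹) ^ d := by
  have hterm : ∀ j ∈ Icc 1 i, ∀ k ∈ Icc 1 i,
      pwDterm α (i+1) j k = (1+2*α)⁻¹ * pwDterm α i j k := by
    intro j hj k hk
    simp only [Finset.mem_Icc] at hj hk
    have hm : max j k ≤ i := by omega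
    have : i + 1 - max j k = (i - max j k) + 1 := by omega
    rw [pwDterm, pwDterm, this, pow_succ]
    ring
  have htop1 : ∀ j ∈ Icc 1 i, pwDterm α (i+1) j (i+1) = ((1+α)⁻¹) ^ (i + 1 - j) := by
    intro j hj
    simp only [Finset.mem_Icc] at hj
    have h1 : max j (i+1) = i + 1 := by omega
    have h2 : min j (i+1) = j := by omega
    rw [pwDterm, h1, h2, Nat.sub_self, pow_zero, mul_one]
  have htop2 : ∀ k ∈ Icc 1 i, pwDterm α (i+1) (i+1) k = ((1+α)⁻¹) ^ (i + 1 - k) := by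
    intro k hk
    simp only [Finset.mem_Icc] at hk
    have h1 : max (i+1) k = i + 1 := by omega
    have h2 : min (i+1) k = k := by omega
    rw [pwDterm, h1, h2, Nat.sub_self, pow_zero, mul_one]
  have hdiag : pwDterm α (i+1) (i+1) (i+1) = 1 := by
    simp [pwDterm]
  rw [pwDsum, Finset.sum_Icc_succ_top (by omega)]
  rw [Finset.sum_congr rfl (fun j hj => Finset.sum_Icc_succ_top (by omega) (f := fun k => pwDterm α (i+1) j k)),
    Finset.sum_Icc_succ_top (by omega) (f := fun k => pwDterm α (i+1) (i+1) k), hdiag]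
  rw [Finset.sum_add_distrib]
  rw [Finset.sum_congr rfl (fun j hj => Finset.sum_congr rfl (fun k hk => hterm j hj k hk)),
    Finset.sum_congr rfl htop1, Finset.sum_congr rfl htop2]
  simp only [← Finset.mul_sum]
  rw [pw_reflect, pwDsum]
  ring

lemma pw_D_closed {α : ℝ} (hα : 0 < α) (i : ℕ) :
    α^2 * pwDsum α i = (α+2)*(1+2*α)/2 + (1+2*α)*(2+3*α)/2 * ((1+2*α)⁻¹)^i
      - 2*(1+α)*(1+2*α) * ((1+α)⁻¹)^i := by
  have h1 : (1:ℝ) + α ≠ 0 := by positivity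
  have h2 : (1:ℝ) + 2*α ≠ 0 := by positivity
  have h3 : α ≠ 0 := ne_of_gt hα
  induction i with
  | zero => simp [pwDsum]; ring
  | succ i ih =>
    rw [pw_D_rec hα, pw_geom hα, pow_succ ((1+2*α)⁻¹) i, pow_succ ((1+α)⁻¹) i]
    rw [mul_add, mul_add, show α^2 * ((1+2*α)⁻¹ * pwDsum α i) = (1+2*α)⁻¹ * (α^2 * pwDsum α i) by ring, ih]
    field_simp
    ring

lemma pw_final {α : ℝ} (hα : 0 < α) (n : ℕ) :
    ∑ i ∈ Icc 1 n, α^2 * pwDsum α i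
      = (2 + α) * (1 + 2 * α) / 2 * n
        + (1 + 2 * α) * (1 + 3 / 2 * α) / (2 * α) * (1 - ((1 + 2 * α) ^ n)⁻¹)
        - 2 * (1 + α) * (1 + 2 * α) / α * (1 - ((1 + α) ^ n)⁻¹) := by
  have h1 : (1:ℝ) + α ≠ 0 := by positivity
  have h2 : (1:ℝ) + 2*α ≠ 0 := by positivity
  have h3 : α ≠ 0 := ne_of_gt hα
  induction n with
  | zero => simp
  | succ n ih =>
    rw [Finset.sum_Icc_succ_top (by omega), ih, pw_D_closed hα]
    simp only [← inv_pow]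
    rw [pow_succ ((1+2*α)⁻¹) n, pow_succ ((1+α)⁻¹) n, Nat.cast_succ]
    field_simp
    ring


end PoissonWeightAux

/-- If `(T_k)` are random times with `T_0 = 0` and i.i.d. rate-1
exponential increments, then for `α > 0` and `n ≥ 1`,
`E[∑_{i=1}^n (∑_{j=1}^i α e^{−α(T_i − T_j)})²]
  = ((2+α)(1+2α)/2)n + ((1+2α)(1+(3/2)α)/(2α))(1 − (1+2α)^{−n})
    − (2(1+α)(1+2α)/α)(1 − (1+α)^{−n})`. -/
theorem poisson_weight_sum_exact {Ω : Type*} [MeasurableSpace Ω] (μ : Measure Ω)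
    [IsProbabilityMeasure μ]
    (T : ℕ → Ω → ℝ) (hT0 : ∀ ω, T 0 ω = 0) (hTmeas : ∀ k, Measurable (T k))
    (hindep : iIndepFun
      (fun k ω => T (k + 1) ω - T k ω) μ)
    (hexp : ∀ k, Measure.map (fun ω => T (k + 1) ω - T k ω) μ = expMeasure 1)
    (α : ℝ) (hα : 0 < α) (n : ℕ) (hn : 1 ≤ n) :
    ∫ ω, (∑ i ∈ Finset.Icc 1 n,
        (∑ j ∈ Finset.Icc 1 i, α * Real.exp (-(α * (T i ω - T j ω)))) ^ 2) ∂μ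
      = (2 + α) * (1 + 2 * α) / 2 * n
        + (1 + 2 * α) * (1 + 3 / 2 * α) / (2 * α) * (1 - ((1 + 2 * α) ^ n)⁻¹)
        - 2 * (1 + α) * (1 + 2 * α) / α * (1 - ((1 + α) ^ n)⁻¹) := by
  set X : ℕ → Ω → ℝ := fun k ω => T (k+1) ω - T k ω with hX
  have hXmeas : ∀ k, Measurable (X k) := fun k => (hTmeas _).sub (hTmeas _)
  have hindep' : iIndepFun X μ := hindep
  have htel : ∀ a b : ℕ, a ≤ b → ∀ ω, (∑ m ∈ Finset.Ico a b, X m) ω = T b ω - T a ω := by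
    intro a b hab ω
    rw [Finset.sum_apply]
    have h1 := Finset.sum_Ico_eq_sub (fun m => T (m+1) ω - T m ω) hab
    rw [show (∑ m ∈ Finset.Ico a b, X m ω) = ∑ m ∈ Finset.Ico a b, (T (m+1) ω - T m ω) from rfl,
      h1, Finset.sum_range_sub (fun m => T m ω), Finset.sum_range_sub (fun m => T m ω)]
    ring
  have hXint : ∀ c : ℝ, c ≤ 0 → ∀ k, Integrable (fun ω => Real.exp (c * X k ω)) μ := by
    intro c hc k
    have h1 : Integrable (fun x => Real.exp (c * x)) (Measure.map (X k) μ) := by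
      rw [hexp k]; exact aux_integrable_exp hc
    exact (integrable_map_measure (Continuous.aestronglyMeasurable (by continuity))
      (hXmeas k).aemeasurable).mp h1
  have hXval : ∀ c : ℝ, c ≤ 0 → ∀ k, ∫ ω, Real.exp (c * X k ω) ∂μ = (1 - c)⁻¹ := by
    intro c hc k
    rw [← integral_map (f := fun x => Real.exp (c * x)) (hXmeas k).aemeasurable
      (Continuous.aestronglyMeasurable (by continuity)), hexp k, aux_integral_exp hc]
  have hSint : ∀ c : ℝ, c ≤ 0 → ∀ F : Finset ℕ,
      Integrable (fun ω => Real.exp (c * (∑ m ∈ F, X m) ω)) μ := by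
    intro c hc F
    exact hindep'.integrable_exp_mul_sum hXmeas (fun m _ => hXint c hc m)
  have hSval : ∀ c : ℝ, c ≤ 0 → ∀ F : Finset ℕ,
      ∫ ω, Real.exp (c * (∑ m ∈ F, X m) ω) ∂μ = ((1 - c)⁻¹) ^ F.card := by
    intro c hc F
    have h1 : ∫ ω, Real.exp (c * (∑ m ∈ F, X m) ω) ∂μ = mgf (∑ m ∈ F, X m) μ c := rfl
    rw [h1, hindep'.mgf_sum hXmeas F]
    have h2 : ∀ m ∈ F, mgf (X m) μ c = (1 - c)⁻¹ := by
      intro m _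
      have h3 : mgf (X m) μ c = ∫ ω, Real.exp (c * X m ω) ∂μ := rfl
      rw [h3, hXval c hc m]
    rw [Finset.prod_congr rfl h2, Finset.prod_const]
  have hIndepSum : ∀ j k i : ℕ, j ≤ k → k ≤ i →
      IndepFun (fun ω => (∑ m ∈ Finset.Ico k i, X m) ω)
        (fun ω => (∑ m ∈ Finset.Ico j k, X m) ω) μ := by
    intro j k i hjk hki
    have hdisj : Disjoint (Finset.Ico k i) (Finset.Ico j k) :=
      (Finset.Ico_disjoint_Ico_consecutive j k i).symm
    have hbase := hindep'.indepFun_finset (Finset.Ico k i) (Finset.Ico j k) hdisj hXmeas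
    have hgmeas : ∀ S : Finset ℕ,
        Measurable (fun v : (m : {x // x ∈ S}) → ℝ => ∑ m : {x // x ∈ S}, v m) :=
      fun S => Finset.measurable_sum Finset.univ (fun m _ => measurable_pi_apply m)
    have h4 := hbase.comp (hgmeas (Finset.Ico k i)) (hgmeas (Finset.Ico j k))
    have heq : ∀ S : Finset ℕ,
        ((fun v : (m : {x // x ∈ S}) → ℝ => ∑ m : {x // x ∈ S}, v m) ∘
          (fun a (m : {x // x ∈ S}) => X m a)) = fun ω => (∑ m ∈ S, X m) ω := by
      intro S
      funext ω
      simp only [Function.comp_apply, Finset.sum_apply]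
      exact Finset.sum_coe_sort S (fun m => X m ω)
    rwa [heq, heq] at h4
  -- pointwise factorization
  have hpt : ∀ i j k : ℕ, j ≤ k → k ≤ i → ∀ ω,
      Real.exp (-(α * (T i ω - T j ω))) * Real.exp (-(α * (T i ω - T k ω)))
        = Real.exp ((-(2*α)) * (∑ m ∈ Finset.Ico k i, X m) ω)
          * Real.exp ((-α) * (∑ m ∈ Finset.Ico j k, X m) ω) := by
    intro i j k hjk hki ω
    rw [htel k i hki ω, htel j k hjk ω, ← Real.exp_add, ← Real.exp_add]
    congr 1
    ring
  have h2α : -(2*α) ≤ 0 := by linarith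
  have h1α : -α ≤ 0 := by linarith
  -- key two-block expectation
  have key : ∀ i j k : ℕ, j ≤ k → k ≤ i →
      ∫ ω, Real.exp (-(α * (T i ω - T j ω))) * Real.exp (-(α * (T i ω - T k ω))) ∂μ
        = ((1+α)⁻¹) ^ (k - j) * ((1+2*α)⁻¹) ^ (i - k) := by
    intro i j k hjk hki
    rw [integral_congr_ae (Filter.Eventually.of_forall (hpt i j k hjk hki))]
    set f : Ω → ℝ := fun ω => Real.exp ((-(2*α)) * (∑ m ∈ Finset.Ico k i, X m) ω) with hf
    set g : Ω → ℝ := fun ω => Real.exp ((-α) * (∑ m ∈ Finset.Ico j k, X m) ω) with hg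
    have hfg : IndepFun f g μ := by
      have h5 := (hIndepSum j k i hjk hki).comp
        (Real.measurable_exp.comp (measurable_id.const_mul (-(2*α))))
        (Real.measurable_exp.comp (measurable_id.const_mul (-α)))
      exact h5
    have h6 : ∫ ω, f ω * g ω ∂μ = (∫ ω, f ω ∂μ) * ∫ ω, g ω ∂μ :=
      hfg.integral_mul_eq_mul_integral (hSint _ h2α _).1 (hSint _ h1α _).1
    rw [h6, hf, hg, hSval _ h2α _, hSval _ h1α _, Nat.card_Ico, Nat.card_Ico,
      show (1:ℝ) - -(2*α) = 1 + 2*α by ring, show (1:ℝ) - -α = 1 + α by ring]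
    ring
  -- per-term value and integrability
  have hterm_val : ∀ i j k : ℕ, 1 ≤ j → j ≤ i → 1 ≤ k → k ≤ i →
      ∫ ω, (α * Real.exp (-(α * (T i ω - T j ω)))) * (α * Real.exp (-(α * (T i ω - T k ω)))) ∂μ
        = α^2 * pwDterm α i j k := by
    intro i j k _ hji _ hki
    rcases le_total j k with h | h
    · have e1 : (fun ω => (α * Real.exp (-(α * (T i ω - T j ω)))) *
          (α * Real.exp (-(α * (T i ω - T k ω)))))
          = fun ω => (α * α) * (Real.exp (-(α * (T i ω - T j ω))) *
              Real.exp (-(α * (T i ω - T k ω)))) := by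
        funext ω; ring
      rw [e1, integral_const_mul, key i j k h hki, pwDterm, max_eq_right h, min_eq_left h]
      ring
    · have e1 : (fun ω => (α * Real.exp (-(α * (T i ω - T j ω)))) *
          (α * Real.exp (-(α * (T i ω - T k ω)))))
          = fun ω => (α * α) * (Real.exp (-(α * (T i ω - T k ω))) *
              Real.exp (-(α * (T i ω - T j ω)))) := by
        funext ω; ring
      rw [e1, integral_const_mul, key i k j h hji, pwDterm, max_eq_left h, min_eq_right h]
      ring
  have hterm_int : ∀ i j k : ℕ, j ≤ i → k ≤ i →
      Integrable (fun ω => (α * Real.exp (-(α * (T i ω - T j ω)))) *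
        (α * Real.exp (-(α * (T i ω - T k ω))))) μ := by
    have base : ∀ i j k : ℕ, j ≤ k → k ≤ i →
        Integrable (fun ω => (α * Real.exp (-(α * (T i ω - T j ω)))) *
          (α * Real.exp (-(α * (T i ω - T k ω))))) μ := by
      intro i j k hjk hki
      have hfg : IndepFun (fun ω => Real.exp ((-(2*α)) * (∑ m ∈ Finset.Ico k i, X m) ω))
          (fun ω => Real.exp ((-α) * (∑ m ∈ Finset.Ico j k, X m) ω)) μ :=
        (hIndepSum j k i hjk hki).comp
          (Real.measurable_exp.comp (measurable_id.const_mul (-(2*α))))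
          (Real.measurable_exp.comp (measurable_id.const_mul (-α)))
      have h7 : Integrable (fun ω => Real.exp ((-(2*α)) * (∑ m ∈ Finset.Ico k i, X m) ω) *
          Real.exp ((-α) * (∑ m ∈ Finset.Ico j k, X m) ω)) μ :=
        hfg.integrable_mul (hSint _ h2α _) (hSint _ h1α _)
      refine (h7.const_mul (α * α)).congr (Filter.Eventually.of_forall fun ω => ?_)
      show α * α * _ = _
      rw [← hpt i j k hjk hki ω]
      ring
    intro i j k hji hki
    rcases le_total j k with h | h
    · exact base i j k h hki
    · refine (base i k j h hji).congr (Filter.Eventually.of_forall fun ω => ?_)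
      show _ * _ = _
      ring
  -- main computation
  have hsq : ∀ (i : ℕ) (ω : Ω),
      (∑ j ∈ Finset.Icc 1 i, α * Real.exp (-(α * (T i ω - T j ω)))) ^ 2
        = ∑ j ∈ Finset.Icc 1 i, ∑ k ∈ Finset.Icc 1 i,
            (α * Real.exp (-(α * (T i ω - T j ω)))) * (α * Real.exp (-(α * (T i ω - T k ω)))) := by
    intro i ω
    rw [sq, Finset.sum_mul_sum]
  calc ∫ ω, (∑ i ∈ Finset.Icc 1 n,
        (∑ j ∈ Finset.Icc 1 i, α * Real.exp (-(α * (T i ω - T j ω)))) ^ 2) ∂μ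
      = ∫ ω, (∑ i ∈ Finset.Icc 1 n, ∑ j ∈ Finset.Icc 1 i, ∑ k ∈ Finset.Icc 1 i,
          (α * Real.exp (-(α * (T i ω - T j ω)))) * (α * Real.exp (-(α * (T i ω - T k ω))))) ∂μ := by
        simp only [hsq]
    _ = ∑ i ∈ Finset.Icc 1 n, ∑ j ∈ Finset.Icc 1 i, ∑ k ∈ Finset.Icc 1 i,
          ∫ ω, (α * Real.exp (-(α * (T i ω - T j ω)))) * (α * Real.exp (-(α * (T i ω - T k ω)))) ∂μ := by
        rw [integral_finset_sum _ (fun i _ => integrable_finset_sum _ (fun j hj =>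
          integrable_finset_sum _ (fun k hk =>
            hterm_int i j k (Finset.mem_Icc.mp hj).2 (Finset.mem_Icc.mp hk).2)))]
        refine Finset.sum_congr rfl fun i _ => ?_
        rw [integral_finset_sum _ (fun j hj => integrable_finset_sum _ (fun k hk =>
          hterm_int i j k (Finset.mem_Icc.mp hj).2 (Finset.mem_Icc.mp hk).2))]
        refine Finset.sum_congr rfl fun j hj => ?_
        rw [integral_finset_sum _ (fun k hk =>
          hterm_int i j k (Finset.mem_Icc.mp hj).2 (Finset.mem_Icc.mp hk).2)]
    _ = ∑ i ∈ Finset.Icc 1 n, α^2 * pwDsum α i := by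
        refine Finset.sum_congr rfl fun i _ => ?_
        rw [pwDsum, Finset.mul_sum]
        refine Finset.sum_congr rfl fun j hj => ?_
        rw [Finset.mul_sum]
        refine Finset.sum_congr rfl fun k hk => ?_
        exact hterm_val i j k (Finset.mem_Icc.mp hj).1 (Finset.mem_Icc.mp hj).2
          (Finset.mem_Icc.mp hk).1 (Finset.mem_Icc.mp hk).2
    _ = _ := pw_final hα n
end

section
/- Let f : ℝ^d → ℝ be differentiable, let η, η', γ, γ' be real numbers with α := η + η' > 0, and let τ_1, τ_2, … be positive reals with T_k = τ_1 + ⋯ + τ_k and η' + η e^{−α τ_{m+1}} ≠ 0 for every m ≥ 0. Define x̃_0 = z̃_0 = x₀ and, for m ≥ 0: ỹ_m = x̃_m + (η/α)(1 − e^{−α τ_{m+1}})(z̃_m − x̃_m); x̃_{m+1} = ỹ_m − γ∇f(ỹ_m); z̃_{m+1} = z̃_m + [η'(1 − e^{−α τ_{m+1}})/(η' + η e^{−α τ_{m+1}})](ỹ_m − z̃_m) − γ'∇f(ỹ_m). Then for every k ≥ 1, e^{α T_k}(x̃_k − z̃_k) = (γ' − γ) Σ_{i=1}^k e^{α T_i}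 ∇f(ỹ_{i−1}). -/
/-- pathwise integration-by-parts identity for the continuized Nesterov
algorithm. With positive inter-jump gaps `τ_m`, jump times `T_k = τ_0 + ⋯ + τ_{k−1}`, and
iterates defined by the continuized Nesterov recursion, for every `k ≥ 1`,
`e^{α T_k}(x̃_k − z̃_k) = (γ' − γ) ∑_{i=1}^k e^{α T_i} ∇f(ỹ_{i−1})`. -/
theorem continuized_nesterov_integration_by_parts {d : ℕ}
    (f : EuclideanSpace ℝ (Fin d) → ℝ)
    (f' : EuclideanSpace ℝ (Fin d) → EuclideanSpace ℝ (Fin d))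
    (hgrad : ∀ x, HasGradientAt f (f' x) x)
    (η η' γ γ' α : ℝ) (hα : α = η + η') (hαpos : 0 < α)
    (τ : ℕ → ℝ) (hτ : ∀ m, 0 < τ m)
    (T : ℕ → ℝ) (hT : ∀ k, T k = ∑ i ∈ Finset.range k, τ i)
    (hden : ∀ m, η' + η * Real.exp (-(α * τ m)) ≠ 0)
    (x₀ : EuclideanSpace ℝ (Fin d))
    (X Y Z : ℕ → EuclideanSpace ℝ (Fin d))
    (hX0 : X 0 = x₀) (hZ0 : Z 0 = x₀)
    (hY : ∀ m, Y m = X m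
      + ((η / α) * (1 - Real.exp (-(α * τ m)))) • (Z m - X m))
    (hX : ∀ m, X (m + 1) = Y m - γ • f' (Y m))
    (hZ : ∀ m, Z (m + 1) = Z m
      + (η' * (1 - Real.exp (-(α * τ m))) / (η' + η * Real.exp (-(α * τ m)))) • (Y m - Z m)
      - γ' • f' (Y m))
    (k : ℕ) (hk : 1 ≤ k) :
    Real.exp (α * T k) • (X k - Z k)
      = (γ' - γ) • ∑ i ∈ Finset.range k, Real.exp (α * T (i + 1)) • f' (Y i) := by
  clear hk
  subst hα
  have hα0 : η + η' ≠ 0 := ne_of_gt hαpos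
  have key : ∀ m, X (m + 1) - Z (m + 1)
      = Real.exp (-((η + η') * τ m)) • (X m - Z m) + (γ' - γ) • f' (Y m) := by
    intro m
    have hne := hden m
    rw [hX, hZ, hY]
    set E := Real.exp (-((η + η') * τ m)) with hE
    match_scalars <;> field_simp <;> ring
  induction k with
  | zero => simp [hX0, hZ0]
  | succ m ih =>
    have hTm : T (m + 1) = T m + τ m := by
      rw [hT, hT, Finset.sum_range_succ]
    rw [Finset.sum_range_succ, smul_add, ← ih, key m, smul_add, smul_smul, hTm]
    congr 1
    · rw [← Real.exp_add]
      congr 2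
      ring
    · rw [smul_comm]
end
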